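/- arXiv:2106.05355 — 6 statements merged into one kernel-verified Lean document; each statement's English description precedes it below -/
import Mathlib

section
/- Let F ⊆ binom([n], k) be intersecting with |F| ≤ C(n-1, k-1)/(2k) and n ≥ 3k. Then |D(F)| ≤ ∑_{ℓ=0}^{k-1} C(n-1, ℓ). -/
open Finset

def diffFam (F : Finset (Finset ℕ)) : Finset (Finset ℕ) :=
  (F ×ˢ F).image fun p => p.1 \ p.2

def Intersecting (F : Finset (Finset ℕ)) : Prop :=
  ∀ A ∈ F, ∀ B ∈ F, (A ∩ B).Nonempty

lemma choose_step (m j : ℕ) (h : 3 * j + 2 ≤ m) :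
    2 * m.choose j ≤ m.choose (j + 1) := by
  have h1 : m.choose (j + 1) * (j + 1) = m.choose j * (m - j) :=
    Nat.choose_succ_right_eq m j
  have h2 : 2 * m.choose j * (j + 1) ≤ m.choose (j + 1) * (j + 1) := by
    rw [h1]
    calc 2 * m.choose j * (j + 1) = m.choose j * (2 * (j + 1)) := by ring
      _ ≤ m.choose j * (m - j) := Nat.mul_le_mul_left _ (by omega)
  exact Nat.le_of_mul_le_mul_right h2 (Nat.succ_pos j)

lemma sumGeo (m : ℕ) : ∀ r : ℕ, 3 * r ≤ m →
    ∑ j ∈ Finset.range r, m.choose j ≤ m.choose r := by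
  intro r
  induction r with
  | zero => simp
  | succ r ih =>
    intro h
    rw [Finset.sum_range_succ]
    have h1 := ih (by omega)
    have h2 := choose_step m r (by omega)
    omega

lemma sumPascal (m : ℕ) : ∀ r : ℕ,
    ∑ i ∈ Finset.range (r + 1), (m + 1).choose i
      = ∑ i ∈ Finset.range (r + 1), m.choose i + ∑ j ∈ Finset.range r, m.choose j := by
  intro r
  induction r with
  | zero => simp
  | succ r ih =>
    rw [Finset.sum_range_succ, ih, Nat.choose_succ_succ,
      Finset.sum_range_succ (fun i => m.choose i) (r + 1),
      Finset.sum_range_succ (fun j => m.choose j) r]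
    ring

lemma arith (m k : ℕ) (hk : 1 ≤ k) (hn : 3 * k ≤ m + 1) :
    2 * ∑ i ∈ Finset.range (k - 1), (m + 1).choose i + m.choose (k - 1)
      ≤ 2 * ∑ ℓ ∈ Finset.range k, m.choose ℓ := by
  rcases Nat.lt_or_ge k 2 with hk2 | hk2
  · interval_cases k
    simp
  · obtain ⟨s, rfl⟩ : ∃ s, k = s + 2 := ⟨k - 2, by omega⟩
    have hp := sumPascal m s
    have hg : ∑ j ∈ Finset.range s, m.choose j ≤ m.choose s := sumGeo m s (by omega)
    have hs : 2 * m.choose s ≤ m.choose (s + 1) := choose_step m s (by omega)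
    have e1 : s + 2 - 1 = s + 1 := rfl
    rw [e1, hp, Finset.sum_range_succ (fun ℓ => m.choose ℓ) (s + 1)]
    omega

theorem stmt3 (n k : ℕ) (F : Finset (Finset ℕ))
    (hF : F ⊆ (Finset.Icc 1 n).powersetCard k) (hint : Intersecting F)
    (hsize : (F.card : ℝ) ≤ ((n - 1).choose (k - 1) : ℝ) / (2 * k))
    (hn : 3 * k ≤ n) :
    (diffFam F).card ≤ ∑ ℓ ∈ Finset.range k, (n - 1).choose ℓ := by
  -- case k = 0
  rcases Nat.eq_zero_or_pos k with rfl | hk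
  · have hFe : F = ∅ := by
      rcases F.eq_empty_or_nonempty with h | ⟨A, hA⟩
      · exact h
      · have hA' := hF hA
        rw [Finset.mem_powersetCard] at hA'
        have : A = ∅ := Finset.card_eq_zero.mp hA'.2
        subst this
        have := hint ∅ hA ∅ hA
        simp at this
    subst hFe
    simp [diffFam]
  -- basic facts about members of F
  have hmem : ∀ A ∈ F, A ⊆ Finset.Icc 1 n ∧ A.card = k := by
    intro A hA
    have := hF hA
    rwa [Finset.mem_powersetCard] at this
  -- every difference has card < k and is a subset of Icc 1 n
  have hdiff : ∀ D ∈ diffFam F, D.card < k ∧ D ⊆ Finset.Icc 1 n := by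
    intro D hD
    simp only [diffFam, Finset.mem_image, Finset.mem_product] at hD
    obtain ⟨⟨A, B⟩, ⟨hA, hB⟩, rfl⟩ := hD
    obtain ⟨hAsub, hAcard⟩ := hmem A hA
    obtain ⟨x, hx⟩ := hint A hA B hB
    rw [Finset.mem_inter] at hx
    have hssub : A \ B ⊂ A := by
      refine Finset.ssubset_iff_of_subset (Finset.sdiff_subset) |>.mpr ?_
      exact ⟨x, hx.1, by simp [hx.2]⟩
    constructor
    · calc (A \ B).card < A.card := Finset.card_lt_card hssub
        _ = k := hAcard
    · exact Finset.sdiff_subset.trans hAsub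
  -- split diffFam
  set Dk := (diffFam F).filter (fun D => D.card = k - 1) with hDk
  set Ds := (diffFam F).filter (fun D => ¬ D.card = k - 1) with hDs
  have hsplit : Dk.card + Ds.card = (diffFam F).card :=
    Finset.card_filter_add_card_filter_not _
  -- bound on Dk : it injects into F.biUnion (erase images)
  have hDkbound : Dk.card ≤ k * F.card := by
    have hsub : Dk ⊆ F.biUnion (fun A => A.image (fun x => A.erase x)) := by
      intro D hD
      rw [hDk, Finset.mem_filter] at hD
      obtain ⟨hDmem, hDcard⟩ := hD
      simp only [diffFam, Finset.mem_image, Finset.mem_product] at hDmem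
      obtain ⟨⟨A, B⟩, ⟨hA, hB⟩, rfl⟩ := hDmem
      obtain ⟨hAsub, hAcard⟩ := hmem A hA
      have hDsubA : A \ B ⊆ A := Finset.sdiff_subset
      have hcards : (A \ (A \ B)).card = 1 := by
        rw [Finset.card_sdiff_of_subset hDsubA, hAcard, hDcard]
        omega
      obtain ⟨x, hx⟩ := Finset.card_eq_one.mp hcards
      have hxA : x ∈ A := by
        have : x ∈ A \ (A \ B) := by rw [hx]; exact Finset.mem_singleton_self x
        exact (Finset.mem_sdiff.mp this).1
      have hDeq : A \ B = A.erase x := by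
        have h1 : A \ (A \ (A \ B)) = A \ B := Finset.sdiff_sdiff_self_left A _ |>.trans
          (Finset.inter_eq_right.mpr hDsubA)
        rw [← h1, hx, Finset.sdiff_singleton_eq_erase]
      rw [Finset.mem_biUnion]
      exact ⟨A, hA, Finset.mem_image.mpr ⟨x, hxA, hDeq.symm⟩⟩
    calc Dk.card ≤ (F.biUnion (fun A => A.image (fun x => A.erase x))).card :=
          Finset.card_le_card hsub
      _ ≤ ∑ A ∈ F, (A.image (fun x => A.erase x)).card := Finset.card_biUnion_le
      _ ≤ ∑ A ∈ F, k := by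
          apply Finset.sum_le_sum
          intro A hA
          calc (A.image (fun x => A.erase x)).card ≤ A.card := Finset.card_image_le
            _ = k := (hmem A hA).2
      _ = k * F.card := by rw [Finset.sum_const, smul_eq_mul, Nat.mul_comm]
  -- bound on Ds
  have hDsbound : Ds.card ≤ ∑ i ∈ Finset.range (k - 1), n.choose i := by
    have hsub : Ds ⊆ (Finset.range (k - 1)).biUnion
        (fun i => (Finset.Icc 1 n).powersetCard i) := by
      intro D hD
      rw [hDs, Finset.mem_filter] at hD
      obtain ⟨hDmem, hDcard⟩ := hD
      obtain ⟨hlt, hsubI⟩ := hdiff D hDmem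
      rw [Finset.mem_biUnion]
      refine ⟨D.card, Finset.mem_range.mpr (by omega), ?_⟩
      rw [Finset.mem_powersetCard]
      exact ⟨hsubI, rfl⟩
    calc Ds.card ≤ _ := Finset.card_le_card hsub
      _ ≤ ∑ i ∈ Finset.range (k - 1), ((Finset.Icc 1 n).powersetCard i).card :=
          Finset.card_biUnion_le
      _ = ∑ i ∈ Finset.range (k - 1), n.choose i := by
          apply Finset.sum_congr rfl
          intro i _
          rw [Finset.card_powersetCard, Nat.card_Icc]
          norm_num
  -- from the real hypothesis: 2 * (k * F.card) ≤ (n-1).choose (k-1)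
  have hFbound : 2 * (k * F.card) ≤ (n - 1).choose (k - 1) := by
    have hkpos : (0 : ℝ) < 2 * k := by positivity
    have h1 : (F.card : ℝ) * (2 * k) ≤ ((n - 1).choose (k - 1) : ℝ) :=
      (le_div_iff₀ hkpos).mp hsize
    have h2 : ((2 * (k * F.card) : ℕ) : ℝ) ≤ (((n - 1).choose (k - 1) : ℕ) : ℝ) := by
      push_cast
      linarith
    exact_mod_cast h2
  -- conclude
  obtain ⟨m, rfl⟩ : ∃ m, n = m + 1 := ⟨n - 1, by omega⟩
  have harith := arith m k hk (by omega)
  simp only [Nat.add_sub_cancel] at hFbound ⊢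
  have : 2 * (diffFam F).card ≤ 2 * ∑ ℓ ∈ Finset.range k, m.choose ℓ := by
    calc 2 * (diffFam F).card = 2 * Dk.card + 2 * Ds.card := by omega
      _ ≤ (m).choose (k - 1) + 2 * ∑ i ∈ Finset.range (k - 1), (m + 1).choose i := by
          have := hDsbound
          omega
      _ ≤ 2 * ∑ ℓ ∈ Finset.range k, m.choose ℓ := by omega
  omega
end

section
/- Suppose 2 < c < 4, n = ck, and k is sufficiently large (depending on c). Then ∑_{ℓ=0}^{k-2} C(n-k-1, ℓ) > C(n-k-1, k-1). -/
/-! With `m = n - k - 1 ≈ (c - 1) k`, the ratio `C(m, ℓ + 1) / C(m, ℓ) = (m - ℓ) / (ℓ + 1)` is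
about `c - 2 < 2` for `ℓ` near `k`, so for any fixed `N` it is at most `ρ = c / 2 < 2` on the last
`N` steps below `k - 1` once `k` is large. Going down from `C(m, k - 1)` the binomial coefficients
therefore shrink at most geometrically with ratio `ρ⁻¹ > 1 / 2`, and `∑_{j ≥ 1} ρ⁻ʲ > 1`. -/

theorem exists_one_lt_sum_range_pow_succ {s : ℝ} (hs : 1 / 2 < s) (hs1 : s < 1) :
    ∃ N : ℕ, 1 < ∑ j ∈ Finset.range N, s ^ (j + 1) := by
  have hsum : HasSum (fun j => s ^ (j + 1)) (s * (1 - s)⁻¹) := by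
    simpa only [pow_succ'] using (hasSum_geometric_of_lt_one (by linarith) hs1).mul_left s
  have hlim : 1 < s * (1 - s)⁻¹ := by
    rw [← div_eq_mul_inv, one_lt_div (by linarith)]
    linarith
  exact (hsum.tendsto_sum_nat.eventually (lt_mem_nhds hlim)).exists

theorem Nat.choose_succ_right_le_mul_choose {m ℓ : ℕ} {ρ : ℝ}
    (h : ((m - ℓ : ℕ) : ℝ) ≤ ρ * (ℓ + 1)) :
    (m.choose (ℓ + 1) : ℝ) ≤ ρ * m.choose ℓ := by
  refine le_of_mul_le_mul_right ?_ (by positivity : (0 : ℝ) < ℓ + 1)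
  calc (m.choose (ℓ + 1) : ℝ) * (ℓ + 1) = m.choose ℓ * ((m - ℓ : ℕ) : ℝ) := by
        exact_mod_cast Nat.choose_succ_right_eq m ℓ
    _ ≤ m.choose ℓ * (ρ * (ℓ + 1)) := by gcongr
    _ = ρ * m.choose ℓ * (ℓ + 1) := by ring

section GeometricDecay

variable {a : ℕ → ℝ} {ρ : ℝ} {N : ℕ}

theorem mul_inv_pow_le_of_le_mul_succ (hρ : 0 < ρ) (ha : ∀ j < N, a j ≤ ρ * a (j + 1)) :
    ∀ j ≤ N, a 0 * ρ⁻¹ ^ j ≤ a j := by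
  intro j
  induction j with
  | zero => simp
  | succ j ih =>
    intro hj
    calc a 0 * ρ⁻¹ ^ (j + 1) = a 0 * ρ⁻¹ ^ j * ρ⁻¹ := by ring
      _ ≤ a j * ρ⁻¹ := by gcongr; exact ih (by omega)
      _ ≤ ρ * a (j + 1) * ρ⁻¹ := by gcongr; exact ha j hj
      _ = a (j + 1) := by field_simp

theorem lt_sum_range_succ_of_le_mul_succ (hρ : 0 < ρ) (ha0 : 0 < a 0)
    (ha : ∀ j < N, a j ≤ ρ * a (j + 1)) (hN : 1 < ∑ j ∈ Finset.range N, ρ⁻¹ ^ (j + 1)) :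
    a 0 < ∑ j ∈ Finset.range N, a (j + 1) :=
  calc a 0 < a 0 * ∑ j ∈ Finset.range N, ρ⁻¹ ^ (j + 1) := lt_mul_of_one_lt_right ha0 hN
    _ = ∑ j ∈ Finset.range N, a 0 * ρ⁻¹ ^ (j + 1) := Finset.mul_sum _ _ _
    _ ≤ ∑ j ∈ Finset.range N, a (j + 1) := Finset.sum_le_sum fun j hj =>
        mul_inv_pow_le_of_le_mul_succ hρ ha (j + 1) (Finset.mem_range.mp hj)

end GeometricDecay

theorem sum_range_choose_sub_succ_le {m k N : ℕ} (hN : N ≤ k - 1) :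
    ∑ j ∈ Finset.range N, m.choose (k - 1 - (j + 1)) ≤
      ∑ ℓ ∈ Finset.range (k - 1), m.choose ℓ := by
  calc ∑ j ∈ Finset.range N, m.choose (k - 1 - (j + 1))
      = ∑ j ∈ Finset.range N, m.choose (k - 1 - 1 - j) :=
        Finset.sum_congr rfl fun j _ => by congr 1; omega
    _ ≤ ∑ j ∈ Finset.range (k - 1), m.choose (k - 1 - 1 - j) :=
        Finset.sum_le_sum_of_subset (Finset.range_subset_range.mpr hN)
    _ = ∑ ℓ ∈ Finset.range (k - 1), m.choose ℓ := Finset.sum_range_reflect _ _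

theorem stmt5 (c : ℝ) (hc2 : 2 < c) (hc4 : c < 4) :
    ∃ k0 : ℕ, ∀ k n : ℕ, k0 ≤ k → (n : ℝ) = c * k →
      (n - k - 1).choose (k - 1) < ∑ ℓ ∈ Finset.range (k - 1), (n - k - 1).choose ℓ := by
  obtain ⟨N, hN⟩ := exists_one_lt_sum_range_pow_succ (s := (c / 2)⁻¹)
    (by rw [inv_div, lt_div_iff₀ (by linarith)]; linarith)
    (inv_lt_one_of_one_lt₀ (by linarith))
  obtain ⟨k1, hk1⟩ := exists_nat_ge ((2 + c) * N / (4 - c))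
  refine ⟨max (N + 1) k1, fun k n hk hn => ?_⟩
  have hkN : N + 1 ≤ k := le_of_max_le_left hk
  have hk_large : (2 + c) * N ≤ (4 - c) * k := by
    have : ((2 + c) * N / (4 - c) : ℝ) ≤ k := hk1.trans (by exact_mod_cast le_of_max_le_right hk)
    rw [div_le_iff₀ (by linarith)] at this
    linarith
  have hkn : 2 * k + 1 ≤ n := by
    have : (2 * k : ℝ) < n := by rw [hn]; nlinarith [(by exact_mod_cast hkN : (N : ℝ) + 1 ≤ k)]
    exact_mod_cast this
  set m := n - k - 1 with hm_def
  have hm : (m : ℝ) = (c - 1) * k - 1 := by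
    rw [hm_def, Nat.cast_sub (by omega), Nat.cast_sub (by omega), hn]; push_cast; ring
  have hratio : ∀ j < N, (m.choose (k - 1 - j) : ℝ) ≤ c / 2 * m.choose (k - 1 - (j + 1)) := by
    intro j hj
    rw [show k - 1 - j = k - 1 - (j + 1) + 1 by omega]
    apply Nat.choose_succ_right_le_mul_choose
    have hj' : (2 + c) * (j + 1) ≤ (2 + c) * N := by gcongr; exact_mod_cast hj
    rw [Nat.cast_sub (by omega), hm, Nat.cast_sub (by omega), Nat.cast_sub (by omega)]
    push_cast
    linarith
  have key := lt_sum_range_succ_of_le_mul_succ (a := fun j => (m.choose (k - 1 - j) : ℝ))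
    (by linarith) (Nat.cast_pos.mpr (Nat.choose_pos (by omega))) hratio hN
  simp only [Nat.sub_zero] at key
  have hsum : (∑ j ∈ Finset.range N, (m.choose (k - 1 - (j + 1)) : ℝ)) ≤
      ∑ ℓ ∈ Finset.range (k - 1), (m.choose ℓ : ℝ) := by
    exact_mod_cast sum_range_choose_sub_succ_le (by omega)
  exact_mod_cast key.trans_le hsum
end

section
/- Let n > 2k and let B := A_k(n,k) = {A ∈ binom([n],k) : 1 ∈ A, A ∩ [2,k+1] ≠ ∅} ∪ {[2,k+1]}. Then D(S_1) \ D(B) = binom([k+2,n], k-1), where S_1 is the full star at 1; in particular |D(S_1) \ D(B)| = C(n-k-1, k-1). -/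
/-!
Every difference of two sets of the star at `1` is a set `D ⊆ [2,n]` with `|D| ≤ k-1`, and any such
`D` is realised as `(P ∪ D) \ (P ∪ Q)` with `P, D, Q` disjoint and `1 ∈ P`, because `n > 2k`
leaves room. Inside `A_k(n,k)` the same works whenever an element `e ∈ [2,k+1] \ D` can be put
into `P` (possible if `|D| ≤ k-2`) or into `Q` while `D` itself meets `[2,k+1]`. Conversely, a
`(k-1)`-set `D ⊆ [k+2,n]` is no difference in `A_k(n,k)`: `[2,k+1]` misses both `1` and `D`,
and for two star sets `|A \ B| = k-1` forces `A ∩ B = {1}`, so the element of `A` in `[2,k+1]`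
would lie in `D`.
-/

open Finset

/-- The full star of `k`-subsets of `[n]` at element `1`. -/
def fullStar1 (n k : ℕ) : Finset (Finset ℕ) :=
  ((Finset.Icc 1 n).powersetCard k).filter fun A => 1 ∈ A

/-- The family `A_k(n,k)`. -/
def famAk (n k : ℕ) : Finset (Finset ℕ) :=
  (((Finset.Icc 1 n).powersetCard k).filter fun A =>
      1 ∈ A ∧ (A ∩ Finset.Icc 2 (k + 1)).Nonempty) ∪ {Finset.Icc 2 (k + 1)}

section

variable {α : Type*} [DecidableEq α]

lemma union_sdiff_union_eq_of_disjoint {P D Q : Finset α} (hDP : Disjoint D P)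
    (hDQ : Disjoint D Q) : (P ∪ D) \ (P ∪ Q) = D := by
  ext x
  have hxP : x ∈ D → x ∉ P := fun h => Finset.disjoint_left.1 hDP h
  have hxQ : x ∈ D → x ∉ Q := fun h => Finset.disjoint_left.1 hDQ h
  simp only [mem_sdiff, mem_union]
  tauto

lemma exists_card_eq_sdiff_eq {X D P Q : Finset α} {k : ℕ} (hD : D ⊆ X) (hP : P ⊆ X \ D)
    (hQ : Q ⊆ X \ D) (hPQ : Disjoint P Q) (hPk : #P + #D ≤ k) (hQD : #Q ≤ #D)
    (hX : k + #D ≤ #X) :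
    ∃ A₁ A₂, A₁ ⊆ X ∧ A₂ ⊆ X ∧ #A₁ = k ∧ #A₂ = k ∧ P ⊆ A₁ ∧ P ⊆ A₂ ∧ Q ⊆ A₂ ∧
      A₁ \ A₂ = D := by
  rw [subset_sdiff] at hP hQ
  obtain ⟨P', hPP', hP'X, hP'card⟩ := exists_subsuperset_card_eq (n := k - #D)
    (subset_sdiff.2 ⟨hP.1, disjoint_union_right.2 ⟨hP.2, hPQ⟩⟩) (by omega)
    (by grind [le_card_sdiff (D ∪ Q) X, card_union_le D Q])
  rw [subset_sdiff, disjoint_union_right] at hP'X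
  obtain ⟨Q', hQQ', hQ'X, hQ'card⟩ := exists_subsuperset_card_eq (n := #D)
    (subset_sdiff.2 ⟨hQ.1, disjoint_union_right.2 ⟨hQ.2, hP'X.2.2.symm⟩⟩)
    hQD (by grind [le_card_sdiff (D ∪ P') X, card_union_le D P'])
  rw [subset_sdiff, disjoint_union_right] at hQ'X
  refine ⟨P' ∪ D, P' ∪ Q', union_subset hP'X.1 hD, union_subset hP'X.1 hQ'X.1, ?_, ?_,
    hPP'.trans subset_union_left, hPP'.trans subset_union_left, hQQ'.trans subset_union_right,
    union_sdiff_union_eq_of_disjoint hP'X.2.1.symm hQ'X.2.1.symm⟩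
  · rw [card_union_of_disjoint hP'X.2.1]; omega
  · rw [card_union_of_disjoint hQ'X.2.2.symm]; omega

lemma sdiff_subset_erase_of_mem {A B : Finset α} {a : α} (ha : a ∈ B) : A \ B ⊆ A.erase a := by
  rw [← sdiff_singleton_eq_erase]
  exact sdiff_subset_sdiff Subset.rfl (singleton_subset_iff.2 ha)

lemma sdiff_eq_erase_of_card_sdiff_add_one {A B : Finset α} {a : α} (haA : a ∈ A) (haB : a ∈ B)
    (hcard : #(A \ B) + 1 = #A) : A \ B = A.erase a :=
  eq_of_subset_of_card_le (sdiff_subset_erase_of_mem haB) (by rw [card_erase_of_mem haA]; omega)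

end

lemma mem_diffFam {F : Finset (Finset ℕ)} {D : Finset ℕ} :
    D ∈ diffFam F ↔ ∃ A ∈ F, ∃ B ∈ F, A \ B = D := by
  simp [diffFam, and_assoc]

lemma mem_fullStar1 {n k : ℕ} {A : Finset ℕ} :
    A ∈ fullStar1 n k ↔ A ⊆ Icc 1 n ∧ #A = k ∧ 1 ∈ A := by
  simp [fullStar1, and_assoc]

lemma mem_famAk {n k : ℕ} {A : Finset ℕ} :
    A ∈ famAk n k ↔
      (A ⊆ Icc 1 n ∧ #A = k ∧ 1 ∈ A ∧ (A ∩ Icc 2 (k + 1)).Nonempty) ∨ A = Icc 2 (k + 1) := by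
  simp [famAk, and_assoc, or_comm]

lemma mem_famAk_of_mem_inter {n k a : ℕ} {A : Finset ℕ} (hA : A ⊆ Icc 1 n) (hAk : #A = k)
    (h1 : 1 ∈ A) (ha : a ∈ A) (ha' : a ∈ Icc 2 (k + 1)) : A ∈ famAk n k :=
  mem_famAk.2 (.inl ⟨hA, hAk, h1, a, mem_inter.2 ⟨ha, ha'⟩⟩)

lemma subset_Icc_two_and_card_lt_of_mem_diffFam_fullStar1 {n k : ℕ} {D : Finset ℕ}
    (hD : D ∈ diffFam (fullStar1 n k)) : D ⊆ Icc 2 n ∧ #D < k := by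
  obtain ⟨A, hA, B, hB, rfl⟩ := mem_diffFam.1 hD
  obtain ⟨hAn, hAk, h1A⟩ := mem_fullStar1.1 hA
  have hsub : A \ B ⊆ A.erase 1 := sdiff_subset_erase_of_mem (mem_fullStar1.1 hB).2.2
  refine ⟨fun x hx => ?_, ?_⟩
  · obtain ⟨hx1, hxA⟩ := mem_erase.1 (hsub hx)
    have := mem_Icc.1 (hAn hxA)
    rw [mem_Icc]
    omega
  · exact hAk ▸ (card_le_card hsub).trans_lt (card_erase_lt_of_mem h1A)

lemma one_mem_Icc_sdiff {n : ℕ} {D : Finset ℕ} (hn : 1 ≤ n) (hD : D ⊆ Icc 2 n) :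
    1 ∈ Icc 1 n \ D :=
  mem_sdiff.2 ⟨mem_Icc.2 ⟨le_rfl, hn⟩, fun h => by simpa using hD h⟩

lemma mem_diffFam_fullStar1 {n k : ℕ} {D : Finset ℕ} (hD : D ⊆ Icc 2 n) (hDk : #D < k)
    (hn : k + #D ≤ n) : D ∈ diffFam (fullStar1 n k) := by
  obtain ⟨A₁, A₂, hA₁, hA₂, hA₁k, hA₂k, h1A₁, h1A₂, -, hdiff⟩ :=
    exists_card_eq_sdiff_eq (X := Icc 1 n) (P := {1}) (Q := ∅) (k := k)
      (hD.trans (Icc_subset_Icc_left one_le_two))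
      (singleton_subset_iff.2 (one_mem_Icc_sdiff (by omega) hD)) (empty_subset _)
      (disjoint_empty_right _) (by rw [card_singleton]; omega) (by simp) (by simpa using hn)
  exact mem_diffFam.2 ⟨A₁, mem_fullStar1.2 ⟨hA₁, hA₁k, h1A₁ (mem_singleton_self 1)⟩,
    A₂, mem_fullStar1.2 ⟨hA₂, hA₂k, h1A₂ (mem_singleton_self 1)⟩, hdiff⟩

lemma mem_diffFam_famAk {n k : ℕ} {D : Finset ℕ} (hn : 2 * k < n) (hD : D ⊆ Icc 2 n)
    (hDk : #D < k) (h : #D + 2 ≤ k ∨ ¬Disjoint D (Icc 2 (k + 1))) :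
    D ∈ diffFam (famAk n k) := by
  obtain ⟨e, he, heD⟩ := exists_mem_notMem_of_card_lt_card (s := D) (t := Icc 2 (k + 1))
    (by rw [Nat.card_Icc]; omega)
  have hDn : D ⊆ Icc 1 n := hD.trans (Icc_subset_Icc_left one_le_two)
  have h1 := one_mem_Icc_sdiff (by omega) hD
  have he' : e ∈ Icc 1 n \ D := mem_sdiff.2 ⟨Icc_subset_Icc (by omega) (by omega) he, heD⟩
  have hX : k + #D ≤ #(Icc 1 n) := by rw [Nat.card_Icc]; omega
  rcases h with hsmall | hmeet
  · obtain ⟨A₁, A₂, hA₁, hA₂, hA₁k, hA₂k, hPA₁, hPA₂, -, hdiff⟩ :=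
      exists_card_eq_sdiff_eq (P := {1, e}) (Q := ∅) hDn
        (insert_subset h1 (singleton_subset_iff.2 he'))
        (empty_subset _) (disjoint_empty_right _) (by grind [card_insert_le 1 {e}]) (by simp) hX
    refine mem_diffFam.2 ⟨A₁, ?_, A₂, ?_, hdiff⟩
    · exact mem_famAk_of_mem_inter hA₁ hA₁k (hPA₁ (by simp)) (hPA₁ (by simp)) he
    · exact mem_famAk_of_mem_inter hA₂ hA₂k (hPA₂ (by simp)) (hPA₂ (by simp)) he
  · obtain ⟨y, hy⟩ := not_disjoint_iff.1 hmeet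
    have he1 : e ≠ 1 := by rintro rfl; simp at he
    obtain ⟨A₁, A₂, hA₁, hA₂, hA₁k, hA₂k, hPA₁, hPA₂, hQA₂, hdiff⟩ :=
      exists_card_eq_sdiff_eq (P := {1}) (Q := {e}) hDn (singleton_subset_iff.2 h1)
        (singleton_subset_iff.2 he') (disjoint_singleton.2 he1.symm) (by rw [card_singleton]; omega)
        (by simpa using card_pos.2 ⟨y, hy.1⟩) hX
    refine mem_diffFam.2 ⟨A₁, ?_, A₂, ?_, hdiff⟩
    · exact mem_famAk_of_mem_inter hA₁ hA₁k (hPA₁ (mem_singleton_self 1))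
        (sdiff_subset (hdiff ▸ hy.1)) hy.2
    · exact mem_famAk_of_mem_inter hA₂ hA₂k (hPA₂ (mem_singleton_self 1))
        (hQA₂ (mem_singleton_self e)) he

lemma notMem_diffFam_famAk {n k : ℕ} {D : Finset ℕ} (hk : 2 ≤ k) (hD : D ⊆ Icc (k + 2) n)
    (hDk : #D = k - 1) : D ∉ diffFam (famAk n k) := by
  intro hDB
  obtain ⟨A, hA, B, hB, rfl⟩ := mem_diffFam.1 hDB
  obtain ⟨x, hx⟩ : (A \ B).Nonempty := card_pos.1 (by omega)
  have hlow : ∀ y ∈ A \ B, k + 2 ≤ y := fun y hy => (mem_Icc.1 (hD hy)).1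
  rw [mem_famAk] at hA hB
  rcases hA with ⟨-, hAk, h1A, y, hy⟩ | rfl
  · rcases hB with ⟨-, -, h1B, -⟩ | rfl
    · rw [mem_inter, mem_Icc] at hy
      have hyD : y ∈ A \ B := by
        rw [sdiff_eq_erase_of_card_sdiff_add_one h1A h1B (by omega)]
        exact mem_erase.2 ⟨by omega, hy.1⟩
      have := hlow y hyD
      omega
    · have := hlow 1 (mem_sdiff.2 ⟨h1A, by simp⟩)
      omega
  · have := hlow x hx
    have := mem_Icc.1 (mem_sdiff.1 hx).1
    omega

lemma subset_Icc_of_disjoint_Icc {n k : ℕ} {D : Finset ℕ} (hD : D ⊆ Icc 2 n)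
    (hDk : Disjoint D (Icc 2 (k + 1))) : D ⊆ Icc (k + 2) n := fun x hx => by
  have := mem_Icc.1 (hD hx)
  have : x ∉ Icc 2 (k + 1) := disjoint_left.1 hDk hx
  rw [mem_Icc] at this ⊢
  omega

theorem stmt6 (n k : ℕ) (hk : 2 ≤ k) (hn : 2 * k < n) :
    diffFam (fullStar1 n k) \ diffFam (famAk n k) =
      (Finset.Icc (k + 2) n).powersetCard (k - 1) ∧
    (diffFam (fullStar1 n k) \ diffFam (famAk n k)).card = (n - k - 1).choose (k - 1) := by
  have hset : diffFam (fullStar1 n k) \ diffFam (famAk n k) =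
      (Icc (k + 2) n).powersetCard (k - 1) := by
    ext D
    simp only [mem_sdiff, mem_powersetCard]
    constructor
    · rintro ⟨hS, hB⟩
      obtain ⟨hD, hDk⟩ := subset_Icc_two_and_card_lt_of_mem_diffFam_fullStar1 hS
      have hDlarge : ¬(#D + 2 ≤ k ∨ ¬Disjoint D (Icc 2 (k + 1))) :=
        fun h => hB (mem_diffFam_famAk hn hD hDk h)
      rw [not_or, not_le, not_not] at hDlarge
      exact ⟨subset_Icc_of_disjoint_Icc hD hDlarge.2, by omega⟩
    · rintro ⟨hD, hDk⟩
      exact ⟨mem_diffFam_fullStar1 (hD.trans (Icc_subset_Icc_left (by omega))) (by omega)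
        (by omega), notMem_diffFam_famAk hk hD hDk⟩
  refine ⟨hset, ?_⟩
  rw [hset, card_powersetCard, Nat.card_Icc, show n + 1 - (k + 2) = n - k - 1 by omega]
end

section
/- For n > 2k, |D(A_3(n,k))| = 5∑_{i=0}^{k-2} C(n-4, i) + 3∑_{i=0}^{k-3} C(n-4, i). -/
open Finset

def famA3 (n k : ℕ) : Finset (Finset ℕ) :=
  (((Finset.Icc 1 n).powersetCard k).filter fun A =>
      1 ∈ A ∧ (A ∩ ({2, 3, 4} : Finset ℕ)).Nonempty) ∪
  (((Finset.Icc 1 n).powersetCard k).filter fun A => ({2, 3, 4} : Finset ℕ) ⊆ A)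

def condC (A : Finset ℕ) : Prop :=
  (1 ∈ A ∧ (2 ∈ A ∨ 3 ∈ A ∨ 4 ∈ A)) ∨ (2 ∈ A ∧ 3 ∈ A ∧ 4 ∈ A)

lemma mem_famA3 {n k : ℕ} {A : Finset ℕ} :
    A ∈ famA3 n k ↔ A ⊆ Finset.Icc 1 n ∧ A.card = k ∧ condC A := by
  simp only [famA3, condC, Finset.mem_union, Finset.mem_filter, Finset.mem_powersetCard,
    Finset.insert_subset_iff, Finset.singleton_subset_iff]
  constructor
  · rintro (⟨⟨h1,h2⟩,h3,h4⟩|⟨⟨h1,h2⟩,h3⟩)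
    · refine ⟨h1, h2, Or.inl ⟨h3, ?_⟩⟩
      obtain ⟨x, hx⟩ := h4
      simp only [Finset.mem_inter, Finset.mem_insert, Finset.mem_singleton] at hx
      rcases hx with ⟨hxA, rfl|rfl|rfl⟩ <;> tauto
    · exact ⟨h1, h2, Or.inr h3⟩
  · rintro ⟨h1, h2, (⟨h3, h4⟩|h3)⟩
    · refine Or.inl ⟨⟨h1,h2⟩, h3, ?_⟩
      rcases h4 with h|h|h
      · exact ⟨2, by simp [h]⟩
      · exact ⟨3, by simp [h]⟩
      · exact ⟨4, by simp [h]⟩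
    · exact Or.inr ⟨⟨h1,h2⟩, h3⟩

def core (n : ℕ) (V : Finset ℕ) (m : ℕ) : Finset (Finset ℕ) :=
  (((Finset.Icc 5 n).powerset).filter fun B => B.card ≤ m).image fun B => V ∪ B

lemma mem_core {n : ℕ} {V : Finset ℕ} {m : ℕ} {D : Finset ℕ} :
    D ∈ core n V m ↔ ∃ B, B ⊆ Finset.Icc 5 n ∧ B.card ≤ m ∧ D = V ∪ B := by
  simp only [core, Finset.mem_image, Finset.mem_filter, Finset.mem_powerset]
  constructor
  · rintro ⟨B, ⟨h1, h2⟩, rfl⟩; exact ⟨B, h1, h2, rfl⟩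
  · rintro ⟨B, h1, h2, rfl⟩; exact ⟨B, ⟨h1, h2⟩, rfl⟩

lemma core_inter {n : ℕ} {V : Finset ℕ} {m : ℕ} {D : Finset ℕ}
    (hV : V ⊆ ({1,2,3,4} : Finset ℕ)) (hD : D ∈ core n V m) :
    D ∩ ({1,2,3,4} : Finset ℕ) = V := by
  obtain ⟨B, hB, -, rfl⟩ := mem_core.1 hD
  ext x
  simp only [Finset.mem_inter, Finset.mem_union]
  constructor
  · rintro ⟨hx | hx, hx4⟩
    · exact hx
    · exfalso
      have h5 := hB hx
      simp only [Finset.mem_Icc] at h5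
      simp only [Finset.mem_insert, Finset.mem_singleton] at hx4
      omega
  · intro hx; exact ⟨Or.inl hx, hV hx⟩

lemma core_card {n : ℕ} {V : Finset ℕ} {m : ℕ} (hn : 4 ≤ n)
    (hV : V ⊆ ({1,2,3,4} : Finset ℕ)) :
    (core n V m).card = ∑ i ∈ Finset.range (m+1), (n-4).choose i := by
  have hinj : Set.InjOn (fun B => V ∪ B)
      ((((Finset.Icc 5 n).powerset).filter fun B => B.card ≤ m) : Finset (Finset ℕ)) := by
    intro B1 h1 B2 h2 he
    simp only [Finset.mem_coe, Finset.mem_filter, Finset.mem_powerset] at h1 h2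
    have key : ∀ B : Finset ℕ, B ⊆ Finset.Icc 5 n → (V ∪ B) \ ({1,2,3,4} : Finset ℕ) = B := by
      intro B hB
      ext x
      simp only [Finset.mem_sdiff, Finset.mem_union]
      constructor
      · rintro ⟨hx | hx, hx4⟩
        · exact absurd (hV hx) hx4
        · exact hx
      · intro hx
        refine ⟨Or.inr hx, ?_⟩
        have h5 := hB hx
        simp only [Finset.mem_Icc] at h5
        simp only [Finset.mem_insert, Finset.mem_singleton]
        omega
    have e1 := key B1 h1.1
    have e2 := key B2 h2.1
    simp only at he
    rw [← e1, he, e2]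
  rw [core, Finset.card_image_of_injOn hinj]
  have : (((Finset.Icc 5 n).powerset).filter fun B => B.card ≤ m)
      = (Finset.range (m+1)).biUnion (fun i => (Finset.Icc 5 n).powersetCard i) := by
    ext B
    simp only [Finset.mem_filter, Finset.mem_powerset, Finset.mem_biUnion, Finset.mem_range,
      Finset.mem_powersetCard, Nat.lt_succ_iff]
    constructor
    · rintro ⟨h1, h2⟩; exact ⟨B.card, h2, h1, rfl⟩
    · rintro ⟨i, hi, h1, rfl⟩; exact ⟨h1, hi⟩
  rw [this, Finset.card_biUnion]
  · refine Finset.sum_congr rfl fun i _ => ?_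
    rw [Finset.card_powersetCard, Nat.card_Icc,
      show n + 1 - 5 = n - 4 by omega]
  · intro i hi j hj hij
    simp only [Finset.disjoint_left, Finset.mem_powersetCard]
    rintro B ⟨-, rfl⟩ ⟨-, h⟩
    exact hij (h ▸ rfl)

lemma condC_mono {A B : Finset ℕ} (h : A ⊆ B) (hA : condC A) : condC B := by
  unfold condC at *
  rcases hA with ⟨h1, h2|h2|h2⟩ | ⟨h1, h2, h3⟩
  · exact Or.inl ⟨h h1, Or.inl (h h2)⟩
  · exact Or.inl ⟨h h1, Or.inr (Or.inl (h h2))⟩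
  · exact Or.inl ⟨h h1, Or.inr (Or.inr (h h2))⟩
  · exact Or.inr ⟨h h1, h h2, h h3⟩

lemma condC_card {A : Finset ℕ} (hA : condC A) : 2 ≤ A.card := by
  rcases hA with ⟨h1, h2|h2|h2⟩ | ⟨h1, h2, h3⟩
  · exact le_trans (by decide : 2 ≤ ({1,2} : Finset ℕ).card)
      (Finset.card_le_card (by simp [Finset.insert_subset_iff, h1, h2]))
  · exact le_trans (by decide : 2 ≤ ({1,3} : Finset ℕ).card)
      (Finset.card_le_card (by simp [Finset.insert_subset_iff, h1, h2]))
  · exact le_trans (by decide : 2 ≤ ({1,4} : Finset ℕ).card)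
      (Finset.card_le_card (by simp [Finset.insert_subset_iff, h1, h2]))
  · exact le_trans (by decide : 2 ≤ ({2,3} : Finset ℕ).card)
      (Finset.card_le_card (by simp [Finset.insert_subset_iff, h1, h2]))

lemma construct (n k : ℕ) (hk : 3 ≤ k) (hn : 2*k < n)
    (T T' : Finset ℕ) (hT : T ⊆ Finset.Icc 1 4) (hT' : T' ⊆ Finset.Icc 1 4)
    (hCT : condC T) (hCT' : condC T')
    (B : Finset ℕ) (hB : B ⊆ Finset.Icc 5 n)
    (hs : B.card + T.card ≤ k) (hs' : T'.card ≤ T.card + B.card) :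
    (T \ T') ∪ B ∈ diffFam (famA3 n k) := by
  have hIcc : (Finset.Icc 5 n).card = n - 4 := by rw [Nat.card_Icc]; omega
  have hT2 := condC_card hCT
  have hT'2 := condC_card hCT'
  have hTc4 : T.card ≤ 4 := le_trans (Finset.card_le_card hT) (by simp [Nat.card_Icc])
  have hT'c4 : T'.card ≤ 4 := le_trans (Finset.card_le_card hT') (by simp [Nat.card_Icc])
  have hBc : B.card ≤ k - 2 := by omega
  -- choose P
  have hsd : (Finset.Icc 5 n \ B).card = n - 4 - B.card := by
    rw [Finset.card_sdiff_of_subset hB, hIcc]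
  obtain ⟨P, hP, hPc⟩ := Finset.exists_subset_card_eq
    (show k - T.card - B.card ≤ (Finset.Icc 5 n \ B).card by rw [hsd]; omega)
  have hsd2 : ((Finset.Icc 5 n \ B) \ P).card = n - 4 - B.card - (k - T.card - B.card) := by
    rw [Finset.card_sdiff_of_subset hP, hsd, hPc]
  obtain ⟨Q, hQ, hQc⟩ := Finset.exists_subset_card_eq
    (show T.card + B.card - T'.card ≤ ((Finset.Icc 5 n \ B) \ P).card by rw [hsd2]; omega)
  -- pointwise facts
  have hTle : ∀ x ∈ T, 1 ≤ x ∧ x ≤ 4 := fun x hx => Finset.mem_Icc.1 (hT hx)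
  have hT'le : ∀ x ∈ T', 1 ≤ x ∧ x ≤ 4 := fun x hx => Finset.mem_Icc.1 (hT' hx)
  have hBge : ∀ x ∈ B, 5 ≤ x ∧ x ≤ n := fun x hx => Finset.mem_Icc.1 (hB hx)
  have hPge : ∀ x ∈ P, (5 ≤ x ∧ x ≤ n) ∧ x ∉ B := fun x hx => by
    have := Finset.mem_sdiff.1 (hP hx); exact ⟨Finset.mem_Icc.1 this.1, this.2⟩
  have hQge : ∀ x ∈ Q, ((5 ≤ x ∧ x ≤ n) ∧ x ∉ B) ∧ x ∉ P := fun x hx => by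
    have h2 := Finset.mem_sdiff.1 (hQ hx)
    have := Finset.mem_sdiff.1 h2.1
    exact ⟨⟨Finset.mem_Icc.1 this.1, this.2⟩, h2.2⟩
  set F : Finset ℕ := T ∪ (B ∪ P) with hF
  set F' : Finset ℕ := T' ∪ (P ∪ Q) with hF'
  have hdTBP : Disjoint T (B ∪ P) := by
    rw [Finset.disjoint_left]
    intro x hx hx'
    rcases Finset.mem_union.1 hx' with h|h
    · have := hTle x hx; have := hBge x h; omega
    · have := hTle x hx; have := hPge x h; omega
  have hdBP : Disjoint B P := by
    rw [Finset.disjoint_left]; intro x hx hx'; exact (hPge x hx').2 hx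
  have hdT'PQ : Disjoint T' (P ∪ Q) := by
    rw [Finset.disjoint_left]
    intro x hx hx'
    rcases Finset.mem_union.1 hx' with h|h
    · have := hT'le x hx; have := hPge x h; omega
    · have := hT'le x hx; have := hQge x h; omega
  have hdPQ : Disjoint P Q := by
    rw [Finset.disjoint_left]; intro x hx hx'; exact (hQge x hx').2 hx
  have hFcard : F.card = k := by
    rw [hF, Finset.card_union_of_disjoint hdTBP, Finset.card_union_of_disjoint hdBP,
      hPc]
    omega
  have hF'card : F'.card = k := by
    rw [hF', Finset.card_union_of_disjoint hdT'PQ, Finset.card_union_of_disjoint hdPQ,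
      hPc, hQc]
    omega
  have hFsub : F ⊆ Finset.Icc 1 n := by
    intro x hx
    rw [Finset.mem_Icc]
    rcases Finset.mem_union.1 hx with h|h
    · have := hTle x h; omega
    · rcases Finset.mem_union.1 h with h|h
      · have := hBge x h; omega
      · have := hPge x h; omega
  have hF'sub : F' ⊆ Finset.Icc 1 n := by
    intro x hx
    rw [Finset.mem_Icc]
    rcases Finset.mem_union.1 hx with h|h
    · have := hT'le x h; omega
    · rcases Finset.mem_union.1 h with h|h
      · have := hPge x h; omega
      · have := hQge x h; omega
  have hFmem : F ∈ famA3 n k := mem_famA3.2 ⟨hFsub, hFcard,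
    condC_mono (Finset.subset_union_left) hCT⟩
  have hF'mem : F' ∈ famA3 n k := mem_famA3.2 ⟨hF'sub, hF'card,
    condC_mono (Finset.subset_union_left) hCT'⟩
  have hEq : F \ F' = (T \ T') ∪ B := by
    ext x
    simp only [hF, hF', Finset.mem_sdiff, Finset.mem_union]
    constructor
    · rintro ⟨h1 | h1 | h1, h2⟩
      · exact Or.inl ⟨h1, fun h => h2 (Or.inl h)⟩
      · exact Or.inr h1
      · exact absurd (Or.inr (Or.inl h1)) h2
    · rintro (⟨h1, h2⟩ | h1)
      · refine ⟨Or.inl h1, ?_⟩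
        rintro (h|h|h)
        · exact h2 h
        · have := hTle x h1; have := hPge x h; omega
        · have := hTle x h1; have := hQge x h; omega
      · refine ⟨Or.inr (Or.inl h1), ?_⟩
        rintro (h|h|h)
        · have := hBge x h1; have := hT'le x h; omega
        · exact (hPge x h).2 h1
        · exact (hQge x h).1.2 h1
  rw [← hEq]
  exact Finset.mem_image.2 ⟨(F, F'), Finset.mem_product.2 ⟨hFmem, hF'mem⟩, rfl⟩

def target (n k : ℕ) : Finset (Finset ℕ) :=
  core n ∅ (k-2) ∪ core n {1} (k-2) ∪ core n {2} (k-2) ∪ core n {3} (k-2) ∪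
  core n {4} (k-2) ∪ core n {2,3} (k-3) ∪ core n {2,4} (k-3) ∪ core n {3,4} (k-3)

lemma condC_inter {F : Finset ℕ} (hC : condC F) : condC (F ∩ ({1,2,3,4} : Finset ℕ)) := by
  rcases hC with ⟨h1, h2|h2|h2⟩ | ⟨h1, h2, h3⟩
  · exact Or.inl ⟨by simp [Finset.mem_inter, h1], Or.inl (by simp [Finset.mem_inter, h2])⟩
  · exact Or.inl ⟨by simp [Finset.mem_inter, h1], Or.inr (Or.inl (by simp [Finset.mem_inter, h2]))⟩
  · exact Or.inl ⟨by simp [Finset.mem_inter, h1], Or.inr (Or.inr (by simp [Finset.mem_inter, h2]))⟩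
  · exact Or.inr ⟨by simp [Finset.mem_inter, h1], by simp [Finset.mem_inter, h2],
      by simp [Finset.mem_inter, h3]⟩

lemma three_le {F : Finset ℕ} (hC : condC F)
    (h : (2 ∈ F ∧ 3 ∈ F) ∨ (2 ∈ F ∧ 4 ∈ F) ∨ (3 ∈ F ∧ 4 ∈ F)) :
    3 ≤ (F ∩ ({1,2,3,4} : Finset ℕ)).card := by
  by_cases h1 : 1 ∈ F
  · rcases h with ⟨ha, hb⟩ | ⟨ha, hb⟩ | ⟨ha, hb⟩
    · exact le_trans (by decide : 3 ≤ ({1,2,3} : Finset ℕ).card)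
        (Finset.card_le_card (by simp [Finset.insert_subset_iff, Finset.mem_inter, h1, ha, hb]))
    · exact le_trans (by decide : 3 ≤ ({1,2,4} : Finset ℕ).card)
        (Finset.card_le_card (by simp [Finset.insert_subset_iff, Finset.mem_inter, h1, ha, hb]))
    · exact le_trans (by decide : 3 ≤ ({1,3,4} : Finset ℕ).card)
        (Finset.card_le_card (by simp [Finset.insert_subset_iff, Finset.mem_inter, h1, ha, hb]))
  · have h234 : 2 ∈ F ∧ 3 ∈ F ∧ 4 ∈ F := by
      rcases hC with ⟨hh, -⟩ | hh
      · exact absurd hh h1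
      · exact hh
    exact le_trans (by decide : 3 ≤ ({2,3,4} : Finset ℕ).card)
      (Finset.card_le_card
        (by simp [Finset.insert_subset_iff, Finset.mem_inter, h234.1, h234.2.1, h234.2.2]))

set_option maxHeartbeats 1000000 in
lemma diff_subset_target (n k : ℕ) (hk : 3 ≤ k) (hn : 2*k < n) :
    diffFam (famA3 n k) ⊆ target n k := by
  intro D hD
  obtain ⟨⟨F, F'⟩, hmem, rfl⟩ := Finset.mem_image.1 hD
  rw [Finset.mem_product] at hmem
  obtain ⟨hFsub, hFcard, hCF⟩ := mem_famA3.1 hmem.1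
  obtain ⟨hF'sub, hF'card, hCF'⟩ := mem_famA3.1 hmem.2
  set D : Finset ℕ := F \ F' with hDdef
  set B : Finset ℕ := D \ ({1,2,3,4} : Finset ℕ) with hBdef
  have hDsplit : D ∩ ({1,2,3,4} : Finset ℕ) ∪ B = D := by
    rw [hBdef, Finset.union_comm]; exact Finset.sdiff_union_inter D _
  have hBsub : B ⊆ Finset.Icc 5 n := by
    intro x hx
    obtain ⟨hx1, hx2⟩ := Finset.mem_sdiff.1 hx
    have hxn := Finset.mem_Icc.1 (hFsub (Finset.mem_sdiff.1 hx1).1)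
    simp only [Finset.mem_insert, Finset.mem_singleton] at hx2
    rw [Finset.mem_Icc]
    omega
  have hbound : ∀ c : ℕ, c ≤ (F ∩ ({1,2,3,4} : Finset ℕ)).card → B.card ≤ k - c := by
    intro c hc
    have h1 : B ⊆ F \ ({1,2,3,4} : Finset ℕ) :=
      Finset.sdiff_subset_sdiff Finset.sdiff_subset (le_refl _)
    have h2 : (F \ ({1,2,3,4} : Finset ℕ)).card + (F ∩ ({1,2,3,4} : Finset ℕ)).card = k := by
      rw [Finset.card_sdiff_add_card_inter]; exact hFcard
    have h3 := Finset.card_le_card h1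
    omega
  have hc2 : 2 ≤ (F ∩ ({1,2,3,4} : Finset ℕ)).card := condC_card (condC_inter hCF)
  -- key structural facts
  have fact1 : 1 ∈ D → 2 ∉ D ∧ 3 ∉ D ∧ 4 ∉ D := by
    intro h1
    have h1' : 1 ∉ F' := (Finset.mem_sdiff.1 h1).2
    have h234 : 2 ∈ F' ∧ 3 ∈ F' ∧ 4 ∈ F' := by
      rcases hCF' with ⟨hh, -⟩ | hh
      · exact absurd hh h1'
      · exact hh
    refine ⟨?_, ?_, ?_⟩ <;> intro hx <;> exact (Finset.mem_sdiff.1 hx).2 (by tauto)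
  have fact2 : ¬(2 ∈ D ∧ 3 ∈ D ∧ 4 ∈ D) := by
    rintro ⟨h2, h3, h4⟩
    have h2' := (Finset.mem_sdiff.1 h2).2
    have h3' := (Finset.mem_sdiff.1 h3).2
    have h4' := (Finset.mem_sdiff.1 h4).2
    rcases hCF' with ⟨-, hh⟩ | ⟨hh, -⟩ <;> tauto
  have memF : ∀ x, x ∈ D → x ∈ F := fun x hx => (Finset.mem_sdiff.1 hx).1
  simp only [target, Finset.mem_union]
  by_cases d1 : 1 ∈ D
  · -- core {1} (k-2)
    obtain ⟨nd2, nd3, nd4⟩ := fact1 d1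
    have hV : D ∩ ({1,2,3,4} : Finset ℕ) = {1} := by
      ext x
      simp only [Finset.mem_inter, Finset.mem_insert, Finset.mem_singleton]
      constructor
      · rintro ⟨hx, rfl | rfl | rfl | rfl⟩
        · rfl
        · exact absurd hx nd2
        · exact absurd hx nd3
        · exact absurd hx nd4
      · rintro rfl; exact ⟨d1, Or.inl rfl⟩
    have : D ∈ core n {1} (k-2) :=
      mem_core.2 ⟨B, hBsub, hbound 2 hc2, by rw [← hDsplit, hV]⟩
    exact Or.inl (Or.inl (Or.inl (Or.inl (Or.inl (Or.inl (Or.inr this))))))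
  · by_cases d2 : 2 ∈ D <;> by_cases d3 : 3 ∈ D <;> by_cases d4 : 4 ∈ D
    · exact absurd ⟨d2, d3, d4⟩ fact2
    · -- {2,3}
      have hV : D ∩ ({1,2,3,4} : Finset ℕ) = {2,3} := by
        ext x
        simp only [Finset.mem_inter, Finset.mem_insert, Finset.mem_singleton]
        constructor
        · rintro ⟨hx, rfl | rfl | rfl | rfl⟩
          · exact absurd hx d1
          · exact Or.inl rfl
          · exact Or.inr rfl
          · exact absurd hx d4
        · rintro (rfl | rfl)
          · exact ⟨d2, by norm_num⟩
          · exact ⟨d3, by norm_num⟩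
      have hc3 : 3 ≤ (F ∩ ({1,2,3,4} : Finset ℕ)).card :=
        three_le hCF (Or.inl ⟨memF 2 d2, memF 3 d3⟩)
      have : D ∈ core n {2,3} (k-3) :=
        mem_core.2 ⟨B, hBsub, hbound 3 hc3, by rw [← hDsplit, hV]⟩
      exact Or.inl (Or.inl (Or.inr this))
    · -- {2,4}
      have hV : D ∩ ({1,2,3,4} : Finset ℕ) = {2,4} := by
        ext x
        simp only [Finset.mem_inter, Finset.mem_insert, Finset.mem_singleton]
        constructor
        · rintro ⟨hx, rfl | rfl | rfl | rfl⟩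
          · exact absurd hx d1
          · exact Or.inl rfl
          · exact absurd hx d3
          · exact Or.inr rfl
        · rintro (rfl | rfl)
          · exact ⟨d2, by norm_num⟩
          · exact ⟨d4, by norm_num⟩
      have hc3 : 3 ≤ (F ∩ ({1,2,3,4} : Finset ℕ)).card :=
        three_le hCF (Or.inr (Or.inl ⟨memF 2 d2, memF 4 d4⟩))
      have : D ∈ core n {2,4} (k-3) :=
        mem_core.2 ⟨B, hBsub, hbound 3 hc3, by rw [← hDsplit, hV]⟩
      exact Or.inl (Or.inr this)
    · -- {2}
      have hV : D ∩ ({1,2,3,4} : Finset ℕ) = {2} := by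
        ext x
        simp only [Finset.mem_inter, Finset.mem_insert, Finset.mem_singleton]
        constructor
        · rintro ⟨hx, rfl | rfl | rfl | rfl⟩
          · exact absurd hx d1
          · rfl
          · exact absurd hx d3
          · exact absurd hx d4
        · rintro rfl; exact ⟨d2, by norm_num⟩
      have : D ∈ core n {2} (k-2) :=
        mem_core.2 ⟨B, hBsub, hbound 2 hc2, by rw [← hDsplit, hV]⟩
      exact Or.inl (Or.inl (Or.inl (Or.inl (Or.inl (Or.inr this)))))
    · -- {3,4}
      have hV : D ∩ ({1,2,3,4} : Finset ℕ) = {3,4} := by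
        ext x
        simp only [Finset.mem_inter, Finset.mem_insert, Finset.mem_singleton]
        constructor
        · rintro ⟨hx, rfl | rfl | rfl | rfl⟩
          · exact absurd hx d1
          · exact absurd hx d2
          · exact Or.inl rfl
          · exact Or.inr rfl
        · rintro (rfl | rfl)
          · exact ⟨d3, by norm_num⟩
          · exact ⟨d4, by norm_num⟩
      have hc3 : 3 ≤ (F ∩ ({1,2,3,4} : Finset ℕ)).card :=
        three_le hCF (Or.inr (Or.inr ⟨memF 3 d3, memF 4 d4⟩))
      have : D ∈ core n {3,4} (k-3) :=
        mem_core.2 ⟨B, hBsub, hbound 3 hc3, by rw [← hDsplit, hV]⟩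
      exact Or.inr this
    · -- {3}
      have hV : D ∩ ({1,2,3,4} : Finset ℕ) = {3} := by
        ext x
        simp only [Finset.mem_inter, Finset.mem_insert, Finset.mem_singleton]
        constructor
        · rintro ⟨hx, rfl | rfl | rfl | rfl⟩
          · exact absurd hx d1
          · exact absurd hx d2
          · rfl
          · exact absurd hx d4
        · rintro rfl; exact ⟨d3, by norm_num⟩
      have : D ∈ core n {3} (k-2) :=
        mem_core.2 ⟨B, hBsub, hbound 2 hc2, by rw [← hDsplit, hV]⟩
      exact Or.inl (Or.inl (Or.inl (Or.inl (Or.inr this))))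
    · -- {4}
      have hV : D ∩ ({1,2,3,4} : Finset ℕ) = {4} := by
        ext x
        simp only [Finset.mem_inter, Finset.mem_insert, Finset.mem_singleton]
        constructor
        · rintro ⟨hx, rfl | rfl | rfl | rfl⟩
          · exact absurd hx d1
          · exact absurd hx d2
          · exact absurd hx d3
          · rfl
        · rintro rfl; exact ⟨d4, by norm_num⟩
      have : D ∈ core n {4} (k-2) :=
        mem_core.2 ⟨B, hBsub, hbound 2 hc2, by rw [← hDsplit, hV]⟩
      exact Or.inl (Or.inl (Or.inl (Or.inr this)))
    · -- ∅
      have hV : D ∩ ({1,2,3,4} : Finset ℕ) = ∅ := by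
        ext x
        simp only [Finset.mem_inter, Finset.mem_insert, Finset.mem_singleton,
          Finset.notMem_empty, iff_false]
        rintro ⟨hx, rfl | rfl | rfl | rfl⟩ <;> tauto
      have : D ∈ core n ∅ (k-2) :=
        mem_core.2 ⟨B, hBsub, hbound 2 hc2, by rw [← hDsplit, hV]⟩
      exact Or.inl (Or.inl (Or.inl (Or.inl (Or.inl (Or.inl (Or.inl (this)))))))

lemma target_subset_diff (n k : ℕ) (hk : 3 ≤ k) (hn : 2*k < n) :
    target n k ⊆ diffFam (famA3 n k) := by
  intro D hD
  simp only [target, Finset.mem_union] at hD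
  have hcond : ∀ T : Finset ℕ, (1 ∈ T ∧ (2 ∈ T ∨ 3 ∈ T ∨ 4 ∈ T)) ∨ (2 ∈ T ∧ 3 ∈ T ∧ 4 ∈ T)
      → condC T := fun T h => h
  rcases hD with ((((((h | h) | h) | h) | h) | h) | h) | h
  · -- ∅ : T = T' = {1,2}
    obtain ⟨B, hB, hBc, rfl⟩ := mem_core.1 h
    have hc := construct n k hk hn {1,2} {1,2} (by decide) (by decide)
      (hcond _ (by decide)) (hcond _ (by decide)) B hB
      (by rw [show ({1,2} : Finset ℕ).card = 2 from rfl]; omega)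
      (by rw [show ({1,2} : Finset ℕ).card = 2 from rfl]; omega)
    rwa [show ({1,2} : Finset ℕ) \ {1,2} = ∅ by decide] at hc
  · -- {1}
    obtain ⟨B, hB, hBc, rfl⟩ := mem_core.1 h
    rcases Nat.eq_zero_or_pos B.card with hB0 | hBpos
    · have hc := construct n k hk hn {1,2,3} {2,3,4} (by decide) (by decide)
        (hcond _ (by decide)) (hcond _ (by decide)) B hB
        (by rw [show ({1,2,3} : Finset ℕ).card = 3 from rfl]; omega)
        (by rw [show ({1,2,3} : Finset ℕ).card = 3 from rfl,
              show ({2,3,4} : Finset ℕ).card = 3 from rfl]; omega)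
      rwa [show ({1,2,3} : Finset ℕ) \ {2,3,4} = {1} by decide] at hc
    · have hc := construct n k hk hn {1,2} {2,3,4} (by decide) (by decide)
        (hcond _ (by decide)) (hcond _ (by decide)) B hB
        (by rw [show ({1,2} : Finset ℕ).card = 2 from rfl]; omega)
        (by rw [show ({1,2} : Finset ℕ).card = 2 from rfl,
              show ({2,3,4} : Finset ℕ).card = 3 from rfl]; omega)
      rwa [show ({1,2} : Finset ℕ) \ {2,3,4} = {1} by decide] at hc
  · -- {2} : T = {1,2}, T' = {1,3}
    obtain ⟨B, hB, hBc, rfl⟩ := mem_core.1 h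
    have hc := construct n k hk hn {1,2} {1,3} (by decide) (by decide)
      (hcond _ (by decide)) (hcond _ (by decide)) B hB
      (by rw [show ({1,2} : Finset ℕ).card = 2 from rfl]; omega)
      (by rw [show ({1,2} : Finset ℕ).card = 2 from rfl,
            show ({1,3} : Finset ℕ).card = 2 from rfl]; omega)
    rwa [show ({1,2} : Finset ℕ) \ {1,3} = {2} by decide] at hc
  · -- {3} : T = {1,3}, T' = {1,2}
    obtain ⟨B, hB, hBc, rfl⟩ := mem_core.1 h
    have hc := construct n k hk hn {1,3} {1,2} (by decide) (by decide)
      (hcond _ (by decide)) (hcond _ (by decide)) B hB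
      (by rw [show ({1,3} : Finset ℕ).card = 2 from rfl]; omega)
      (by rw [show ({1,3} : Finset ℕ).card = 2 from rfl,
            show ({1,2} : Finset ℕ).card = 2 from rfl]; omega)
    rwa [show ({1,3} : Finset ℕ) \ {1,2} = {3} by decide] at hc
  · -- {4} : T = {1,4}, T' = {1,2}
    obtain ⟨B, hB, hBc, rfl⟩ := mem_core.1 h
    have hc := construct n k hk hn {1,4} {1,2} (by decide) (by decide)
      (hcond _ (by decide)) (hcond _ (by decide)) B hB
      (by rw [show ({1,4} : Finset ℕ).card = 2 from rfl]; omega)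
      (by rw [show ({1,4} : Finset ℕ).card = 2 from rfl,
            show ({1,2} : Finset ℕ).card = 2 from rfl]; omega)
    rwa [show ({1,4} : Finset ℕ) \ {1,2} = {4} by decide] at hc
  · -- {2,3} : T = {1,2,3}, T' = {1,4}
    obtain ⟨B, hB, hBc, rfl⟩ := mem_core.1 h
    have hc := construct n k hk hn {1,2,3} {1,4} (by decide) (by decide)
      (hcond _ (by decide)) (hcond _ (by decide)) B hB
      (by rw [show ({1,2,3} : Finset ℕ).card = 3 from rfl]; omega)
      (by rw [show ({1,2,3} : Finset ℕ).card = 3 from rfl,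
            show ({1,4} : Finset ℕ).card = 2 from rfl]; omega)
    rwa [show ({1,2,3} : Finset ℕ) \ {1,4} = {2,3} by decide] at hc
  · -- {2,4} : T = {1,2,4}, T' = {1,3}
    obtain ⟨B, hB, hBc, rfl⟩ := mem_core.1 h
    have hc := construct n k hk hn {1,2,4} {1,3} (by decide) (by decide)
      (hcond _ (by decide)) (hcond _ (by decide)) B hB
      (by rw [show ({1,2,4} : Finset ℕ).card = 3 from rfl]; omega)
      (by rw [show ({1,2,4} : Finset ℕ).card = 3 from rfl,
            show ({1,3} : Finset ℕ).card = 2 from rfl]; omega)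
    rwa [show ({1,2,4} : Finset ℕ) \ {1,3} = {2,4} by decide] at hc
  · -- {3,4} : T = {1,3,4}, T' = {1,2}
    obtain ⟨B, hB, hBc, rfl⟩ := mem_core.1 h
    have hc := construct n k hk hn {1,3,4} {1,2} (by decide) (by decide)
      (hcond _ (by decide)) (hcond _ (by decide)) B hB
      (by rw [show ({1,3,4} : Finset ℕ).card = 3 from rfl]; omega)
      (by rw [show ({1,3,4} : Finset ℕ).card = 3 from rfl,
            show ({1,2} : Finset ℕ).card = 2 from rfl]; omega)
    rwa [show ({1,3,4} : Finset ℕ) \ {1,2} = {3,4} by decide] at hc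

lemma core_disj {n : ℕ} {V1 V2 : Finset ℕ} {m1 m2 : ℕ}
    (h1 : V1 ⊆ ({1,2,3,4} : Finset ℕ)) (h2 : V2 ⊆ ({1,2,3,4} : Finset ℕ))
    (hne : V1 ≠ V2) : Disjoint (core n V1 m1) (core n V2 m2) :=
  Finset.disjoint_left.2 fun D hd1 hd2 =>
    hne (by rw [← core_inter h1 hd1, core_inter h2 hd2])

theorem stmt9 (n k : ℕ) (hk : 3 ≤ k) (hn : 2 * k < n) :
    (diffFam (famA3 n k)).card =
      5 * ∑ i ∈ Finset.range (k - 1), (n - 4).choose i +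
      3 * ∑ i ∈ Finset.range (k - 2), (n - 4).choose i := by
  have heq : diffFam (famA3 n k) = target n k :=
    Finset.Subset.antisymm (diff_subset_target n k hk (by omega))
      (target_subset_diff n k hk (by omega))
  have hn4 : 4 ≤ n := by omega
  rw [heq, target]
  have d1 : Disjoint (core n ∅ (k-2) ∪ core n {1} (k-2) ∪ core n {2} (k-2) ∪ core n {3} (k-2) ∪
      core n {4} (k-2) ∪ core n {2,3} (k-3) ∪ core n {2,4} (k-3)) (core n {3,4} (k-3)) := by
    simp only [Finset.disjoint_union_left]
    exact ⟨⟨⟨⟨⟨⟨core_disj (by decide) (by decide) (by decide),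
      core_disj (by decide) (by decide) (by decide)⟩,
      core_disj (by decide) (by decide) (by decide)⟩,
      core_disj (by decide) (by decide) (by decide)⟩,
      core_disj (by decide) (by decide) (by decide)⟩,
      core_disj (by decide) (by decide) (by decide)⟩,
      core_disj (by decide) (by decide) (by decide)⟩
  have d2 : Disjoint (core n ∅ (k-2) ∪ core n {1} (k-2) ∪ core n {2} (k-2) ∪ core n {3} (k-2) ∪
      core n {4} (k-2) ∪ core n {2,3} (k-3)) (core n {2,4} (k-3)) := by
    simp only [Finset.disjoint_union_left]
    exact ⟨⟨⟨⟨⟨core_disj (by decide) (by decide) (by decide),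
      core_disj (by decide) (by decide) (by decide)⟩,
      core_disj (by decide) (by decide) (by decide)⟩,
      core_disj (by decide) (by decide) (by decide)⟩,
      core_disj (by decide) (by decide) (by decide)⟩,
      core_disj (by decide) (by decide) (by decide)⟩
  have d3 : Disjoint (core n ∅ (k-2) ∪ core n {1} (k-2) ∪ core n {2} (k-2) ∪ core n {3} (k-2) ∪
      core n {4} (k-2)) (core n {2,3} (k-3)) := by
    simp only [Finset.disjoint_union_left]
    exact ⟨⟨⟨⟨core_disj (by decide) (by decide) (by decide),
      core_disj (by decide) (by decide) (by decide)⟩,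
      core_disj (by decide) (by decide) (by decide)⟩,
      core_disj (by decide) (by decide) (by decide)⟩,
      core_disj (by decide) (by decide) (by decide)⟩
  have d4 : Disjoint (core n ∅ (k-2) ∪ core n {1} (k-2) ∪ core n {2} (k-2) ∪ core n {3} (k-2))
      (core n {4} (k-2)) := by
    simp only [Finset.disjoint_union_left]
    exact ⟨⟨⟨core_disj (by decide) (by decide) (by decide),
      core_disj (by decide) (by decide) (by decide)⟩,
      core_disj (by decide) (by decide) (by decide)⟩,
      core_disj (by decide) (by decide) (by decide)⟩
  have d5 : Disjoint (core n ∅ (k-2) ∪ core n {1} (k-2) ∪ core n {2} (k-2))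
      (core n {3} (k-2)) := by
    simp only [Finset.disjoint_union_left]
    exact ⟨⟨core_disj (by decide) (by decide) (by decide),
      core_disj (by decide) (by decide) (by decide)⟩,
      core_disj (by decide) (by decide) (by decide)⟩
  have d6 : Disjoint (core n ∅ (k-2) ∪ core n {1} (k-2)) (core n {2} (k-2)) := by
    simp only [Finset.disjoint_union_left]
    exact ⟨core_disj (by decide) (by decide) (by decide),
      core_disj (by decide) (by decide) (by decide)⟩
  have d7 : Disjoint (core n ∅ (k-2)) (core n {1} (k-2)) :=
    core_disj (by decide) (by decide) (by decide)
  rw [Finset.card_union_of_disjoint d1, Finset.card_union_of_disjoint d2,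
    Finset.card_union_of_disjoint d3, Finset.card_union_of_disjoint d4,
    Finset.card_union_of_disjoint d5, Finset.card_union_of_disjoint d6,
    Finset.card_union_of_disjoint d7,
    core_card hn4 (by decide), core_card hn4 (by decide), core_card hn4 (by decide),
    core_card hn4 (by decide), core_card hn4 (by decide), core_card hn4 (by decide),
    core_card hn4 (by decide), core_card hn4 (by decide),
    show k - 2 + 1 = k - 1 by omega, show k - 3 + 1 = k - 2 by omega]
  ring
end

section
/- Lovász's version of the Kruskal–Katona theorem: if F ⊆ binom([n],k) and x is the unique real number with k ≤ x ≤ n and |F| = C(x,k) (generalized binomial coefficient), then for every 0 ≤ i < k, |∂^i F| ≥ C(x, i). -/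
open Finset

def levShadow (j : ℕ) (G : Finset (Finset ℕ)) : Finset (Finset ℕ) :=
  G.biUnion fun A => A.powersetCard j

/-- Generalized binomial coefficient `C(x, k)` for real `x`. -/
noncomputable def genChoose (x : ℝ) (k : ℕ) : ℝ :=
  (∏ i ∈ Finset.range k, (x - i)) / (Nat.factorial k)

/-!
UV-compressions `{j} ↦ {i}` with `i < j` preserve `#𝒜` and do not enlarge the shadow, so we may
assume `𝒜` is shifted. Split a shifted family on `{m, m + 1, …}` into the link
`𝒜(m) = {s \ {m} : m ∈ s ∈ 𝒜}` and the rest `𝒜(m̄) = {s ∈ 𝒜 : m ∉ s}`, both shifted on `{m + 1, …}`.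
Then `#∂𝒜 ≥ #𝒜(m) + #∂𝒜(m)` and, by shiftedness, `∂𝒜(m̄) ⊆ 𝒜(m)`. The one-step bound
`C(x, k + 1) ≤ #𝒜 → C(x, k) ≤ #∂𝒜` for `(k + 1)`-uniform `𝒜` follows by induction on `k` and `#𝒜`
using Pascal's rule `C(x, k + 1) = C(x - 1, k) + C(x - 1, k + 1)`: either `#𝒜(m) ≥ C(x - 1, k)` and
the link inherits the hypothesis, or `#𝒜(m̄) > C(x - 1, k + 1)` and the bound for `𝒜(m̄)` contradicts
`∂𝒜(m̄) ⊆ 𝒜(m)`. Iterating the one-step bound gives the theorem.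
-/

open scoped FinsetFamily

section genChoose

lemma genChoose_eq_ringChoose (x : ℝ) (k : ℕ) : genChoose x k = Ring.choose x k := by
  rw [Ring.choose_eq_smul, ← Polynomial.aeval_eq_smeval, Polynomial.aeval_def,
    ← Polynomial.eval_map, descPochhammer_map, descPochhammer_eval_eq_prod_range, smul_eq_mul,
    genChoose, div_eq_inv_mul]

lemma genChoose_zero_right (x : ℝ) : genChoose x 0 = 1 := by
  rw [genChoose_eq_ringChoose, Ring.choose_zero_right]

lemma genChoose_natCast (n k : ℕ) : genChoose n k = n.choose k := by
  rw [genChoose_eq_ringChoose, Ring.choose_natCast]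

lemma genChoose_succ_succ (x : ℝ) (k : ℕ) :
    genChoose (x + 1) (k + 1) = genChoose x k + genChoose x (k + 1) := by
  simp only [genChoose_eq_ringChoose, Ring.choose_succ_succ]

lemma genChoose_nonneg {k : ℕ} {x : ℝ} (hx : (k : ℝ) ≤ x + 1) : 0 ≤ genChoose x k := by
  refine div_nonneg (prod_nonneg fun i hi => ?_) (Nat.cast_nonneg _)
  have : (i : ℝ) + 1 ≤ k := by exact_mod_cast mem_range.1 hi
  linarith

lemma genChoose_le_genChoose {k : ℕ} {x y : ℝ} (hx : (k : ℝ) ≤ x + 1) (hxy : x ≤ y) :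
    genChoose x k ≤ genChoose y k := by
  unfold genChoose
  gcongr
  intro i hi
  have : (i : ℝ) + 1 ≤ k := by exact_mod_cast mem_range.1 hi
  linarith

lemma one_le_genChoose {k : ℕ} {x : ℝ} (hx : (k : ℝ) ≤ x) : 1 ≤ genChoose x k := by
  calc (1 : ℝ) = genChoose k k := by rw [genChoose_natCast, Nat.choose_self, Nat.cast_one]
    _ ≤ genChoose x k := genChoose_le_genChoose (by linarith) hx

end genChoose

section Shadow

variable {α : Type*} [DecidableEq α] {𝒜 : Finset (Finset α)} {s : Finset α}

lemma card_le_card_shadow (hs : s ∈ 𝒜) : #s ≤ #(∂ 𝒜) :=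
  calc #s = #(s.image s.erase) := (card_image_of_injOn s.erase_injOn).symm
    _ ≤ #(∂ 𝒜) := card_le_card fun t ht => by
      obtain ⟨a, ha, rfl⟩ := mem_image.1 ht
      exact erase_mem_shadow hs ha

lemma shadow_memberSubfamily_subset (a : α) (𝒜 : Finset (Finset α)) :
    ∂ (𝒜.memberSubfamily a) ⊆ (∂ 𝒜).memberSubfamily a := by
  intro t ht
  obtain ⟨s, hs, b, hb, rfl⟩ := mem_shadow_iff.1 ht
  rw [mem_memberSubfamily] at hs ⊢
  refine ⟨?_, fun h => hs.2 (mem_of_mem_erase h)⟩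
  rw [← erase_insert_of_ne (ne_of_mem_of_not_mem hb hs.2).symm]
  exact erase_mem_shadow hs.1 (mem_insert_of_mem hb)

lemma memberSubfamily_subset_nonMemberSubfamily_shadow (a : α) (𝒜 : Finset (Finset α)) :
    𝒜.memberSubfamily a ⊆ (∂ 𝒜).nonMemberSubfamily a := by
  intro s hs
  rw [mem_memberSubfamily] at hs
  rw [mem_nonMemberSubfamily, ← erase_insert hs.2]
  exact ⟨erase_mem_shadow hs.1 (mem_insert_self a s), notMem_erase a _⟩

lemma card_memberSubfamily_add_card_shadow_le (a : α) (𝒜 : Finset (Finset α)) :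
    #(𝒜.memberSubfamily a) + #(∂ (𝒜.memberSubfamily a)) ≤ #(∂ 𝒜) := by
  rw [← card_memberSubfamily_add_card_nonMemberSubfamily a (∂ 𝒜), add_comm]
  exact add_le_add (card_le_card (shadow_memberSubfamily_subset a 𝒜))
    (card_le_card (memberSubfamily_subset_nonMemberSubfamily_shadow a 𝒜))

lemma _root_.Set.Sized.memberSubfamily {r : ℕ} (h𝒜 : (𝒜 : Set (Finset α)).Sized (r + 1))
    (a : α) : (𝒜.memberSubfamily a : Set (Finset α)).Sized r := by
  intro s hs
  rw [mem_coe, mem_memberSubfamily] at hs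
  have := h𝒜 hs.1
  rw [card_insert_of_notMem hs.2] at this
  omega

lemma _root_.Set.Sized.nonMemberSubfamily {r : ℕ} (h𝒜 : (𝒜 : Set (Finset α)).Sized r)
    (a : α) : (𝒜.nonMemberSubfamily a : Set (Finset α)).Sized r :=
  h𝒜.mono fun _ hs => (mem_nonMemberSubfamily.1 hs).1

end Shadow

/-- Shifted (stable) families of subsets of `{m, m + 1, …}`. -/
structure IsShiftedFrom (m : ℕ) (𝒜 : Finset (Finset ℕ)) : Prop where
  le_of_mem : ∀ s ∈ 𝒜, ∀ a ∈ s, m ≤ a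
  insert_erase_mem : ∀ s ∈ 𝒜, ∀ j ∈ s, ∀ i, m ≤ i → i < j → i ∉ s → insert i (s.erase j) ∈ 𝒜

namespace IsShiftedFrom

variable {m : ℕ} {𝒜 : Finset (Finset ℕ)}

lemma memberSubfamily (h : IsShiftedFrom m 𝒜) : IsShiftedFrom (m + 1) (𝒜.memberSubfamily m) where
  le_of_mem s hs a ha := by
    rw [mem_memberSubfamily] at hs
    have := h.le_of_mem _ hs.1 a (mem_insert_of_mem ha)
    have : a ≠ m := ne_of_mem_of_not_mem ha hs.2
    omega
  insert_erase_mem s hs j hj i hi hij his := by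
    rw [mem_memberSubfamily] at hs ⊢
    have hjm : j ≠ m := ne_of_mem_of_not_mem hj hs.2
    refine ⟨?_, ?_⟩
    · have := h.insert_erase_mem _ hs.1 j (mem_insert_of_mem hj) i (by omega) hij
        (by rw [mem_insert, not_or]; exact ⟨by omega, his⟩)
      rwa [erase_insert_of_ne hjm.symm, insert_comm] at this
    · simp only [mem_insert, mem_erase, not_or]
      exact ⟨by omega, fun h' => hs.2 h'.2⟩

lemma nonMemberSubfamily (h : IsShiftedFrom m 𝒜) :
    IsShiftedFrom (m + 1) (𝒜.nonMemberSubfamily m) where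
  le_of_mem s hs a ha := by
    rw [mem_nonMemberSubfamily] at hs
    have := h.le_of_mem _ hs.1 a ha
    have : a ≠ m := ne_of_mem_of_not_mem ha hs.2
    omega
  insert_erase_mem s hs j hj i hi hij his := by
    rw [mem_nonMemberSubfamily] at hs ⊢
    refine ⟨h.insert_erase_mem _ hs.1 j hj i (by omega) hij his, ?_⟩
    simp only [mem_insert, mem_erase, not_or]
    exact ⟨by omega, fun h' => hs.2 h'.2⟩

lemma erase_mem_memberSubfamily_of_notMem (h : IsShiftedFrom m 𝒜) {s : Finset ℕ} (hs : s ∈ 𝒜)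
    (hms : m ∉ s) {a : ℕ} (ha : a ∈ s) : s.erase a ∈ 𝒜.memberSubfamily m := by
  have := h.le_of_mem s hs a ha
  have : a ≠ m := ne_of_mem_of_not_mem ha hms
  exact mem_memberSubfamily.2 ⟨h.insert_erase_mem s hs a ha m le_rfl (by omega) hms,
    fun h' => hms (mem_of_mem_erase h')⟩

lemma shadow_nonMemberSubfamily_subset (h : IsShiftedFrom m 𝒜) :
    ∂ (𝒜.nonMemberSubfamily m) ⊆ 𝒜.memberSubfamily m := by
  intro t ht
  obtain ⟨s, hs, a, ha, rfl⟩ := mem_shadow_iff.1 ht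
  rw [mem_nonMemberSubfamily] at hs
  exact h.erase_mem_memberSubfamily_of_notMem hs.1 hs.2 ha

lemma memberSubfamily_nonempty (h : IsShiftedFrom m 𝒜) {s : Finset ℕ} (hs : s ∈ 𝒜)
    (hne : s.Nonempty) : (𝒜.memberSubfamily m).Nonempty := by
  by_cases hms : m ∈ s
  · exact ⟨s.erase m, mem_memberSubfamily.2 ⟨by rwa [insert_erase hms], notMem_erase m s⟩⟩
  · obtain ⟨a, ha⟩ := hne
    exact ⟨_, h.erase_mem_memberSubfamily_of_notMem hs hms ha⟩

end IsShiftedFrom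

lemma genChoose_le_card_shadow_of_le {k : ℕ} {𝒜 : Finset (Finset ℕ)} {s : Finset ℕ}
    (h𝒜 : (𝒜 : Set (Finset ℕ)).Sized (k + 1)) (hs : s ∈ 𝒜) {x : ℝ} (hx : (k : ℝ) ≤ x)
    (hx' : x ≤ k + 1) : genChoose x k ≤ #(∂ 𝒜) :=
  calc genChoose x k ≤ genChoose ↑(k + 1) k :=
        genChoose_le_genChoose (by linarith) (by push_cast; exact hx')
    _ = #s := by rw [h𝒜 hs, genChoose_natCast, Nat.choose_succ_self_right]
    _ ≤ #(∂ 𝒜) := by exact_mod_cast card_le_card_shadow hs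

theorem IsShiftedFrom.genChoose_le_card_shadow {k m : ℕ} {𝒜 : Finset (Finset ℕ)}
    (h : IsShiftedFrom m 𝒜) (h𝒜 : (𝒜 : Set (Finset ℕ)).Sized (k + 1)) (hne : 𝒜.Nonempty)
    {x : ℝ} (hx : (k : ℝ) ≤ x) (hcard : genChoose x (k + 1) ≤ #𝒜) :
    genChoose x k ≤ #(∂ 𝒜) := by
  induction k generalizing m 𝒜 x with
  | zero =>
    obtain ⟨s, hs⟩ := hne
    rw [genChoose_zero_right]
    exact_mod_cast (h𝒜 hs).symm.le.trans (card_le_card_shadow hs)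
  | succ k ihk =>
  induction 𝒜 using Finset.strongInduction generalizing m x with
  | H 𝒜 ih𝒜 =>
  obtain ⟨s, hs⟩ := hne
  rcases le_or_gt x (k + 2) with hsmall | hlarge
  · exact genChoose_le_card_shadow_of_le h𝒜 hs hx (by exact_mod_cast hsmall)
  obtain ⟨y, rfl⟩ : ∃ y, x = y + 1 := ⟨x - 1, by ring⟩
  push_cast at hx hlarge
  rw [genChoose_succ_succ] at hcard ⊢
  by_cases hlink : genChoose y (k + 1) ≤ #(𝒜.memberSubfamily m)
  · have hlink_ne : (𝒜.memberSubfamily m).Nonempty := by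
      rw [← card_pos, ← Nat.cast_pos (α := ℝ)]
      linarith [one_le_genChoose (k := k + 1) (x := y) (by push_cast; linarith)]
    have hlink_shadow := ihk h.memberSubfamily (h𝒜.memberSubfamily m) hlink_ne
      (by linarith) hlink
    have hshadow : (#(𝒜.memberSubfamily m) : ℝ) + #(∂ (𝒜.memberSubfamily m)) ≤ #(∂ 𝒜) := by
      exact_mod_cast card_memberSubfamily_add_card_shadow_le m 𝒜
    linarith
  · exfalso
    rw [not_le] at hlink
    have hsplit : (#(𝒜.memberSubfamily m) : ℝ) + #(𝒜.nonMemberSubfamily m) = #𝒜 := by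
      exact_mod_cast card_memberSubfamily_add_card_nonMemberSubfamily m 𝒜
    have hdel : genChoose y (k + 2) ≤ #(𝒜.nonMemberSubfamily m) := by linarith
    have hdel_ne : (𝒜.nonMemberSubfamily m).Nonempty := by
      rw [← card_pos, ← Nat.cast_pos (α := ℝ)]
      linarith [genChoose_nonneg (k := k + 2) (x := y) (by push_cast; linarith)]
    have hssub : 𝒜.nonMemberSubfamily m ⊂ 𝒜 := by
      obtain ⟨t, ht⟩ := h.memberSubfamily_nonempty hs (card_pos.1 (by rw [h𝒜 hs]; omega))
      exact filter_ssubset.2 ⟨_, (mem_memberSubfamily.1 ht).1, fun h' => h' (mem_insert_self m t)⟩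
    have hdel_shadow := ih𝒜 _ hssub h.nonMemberSubfamily (h𝒜.nonMemberSubfamily m) hdel_ne
      (by push_cast; linarith) hdel
    have hsub : (#(∂ (𝒜.nonMemberSubfamily m)) : ℝ) ≤ #(𝒜.memberSubfamily m) := by
      exact_mod_cast card_le_card h.shadow_nonMemberSubfamily_subset
    linarith

namespace UV

lemma compress_singleton_singleton {i j : ℕ} {s : Finset ℕ} (hi : i ∉ s) (hj : j ∈ s) :
    compress {i} {j} s = insert i (s.erase j) := by
  rw [compress_of_disjoint_of_le (disjoint_singleton_left.2 hi) (singleton_subset_iff.2 hj)]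
  ext a
  simp only [sup_eq_union, mem_sdiff, mem_union, mem_singleton, mem_insert, mem_erase]
  grind

lemma sum_compress_singleton_singleton_lt {i j : ℕ} (hij : i < j) {s : Finset ℕ}
    (hs : compress {i} {j} s ≠ s) : ∑ a ∈ compress {i} {j} s, a < ∑ a ∈ s, a := by
  obtain ⟨hi, hj⟩ : i ∉ s ∧ j ∈ s := by
    by_contra hcond
    refine hs (if_neg fun h => hcond ⟨?_, ?_⟩)
    · exact disjoint_singleton_left.1 h.1
    · exact singleton_subset_iff.1 h.2
  rw [compress_singleton_singleton hi hj, sum_insert fun h => hi (mem_of_mem_erase h),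
    ← sum_erase_add s _ hj]
  omega

lemma sum_sum_compression_lt {i j : ℕ} (hij : i < j) {𝒜 : Finset (Finset ℕ)}
    (h𝒜 : 𝓒 {i} {j} 𝒜 ≠ 𝒜) :
    ∑ s ∈ 𝓒 {i} {j} 𝒜, ∑ a ∈ s, a < ∑ s ∈ 𝒜, ∑ a ∈ s, a := by
  rw [compression] at h𝒜 ⊢
  have hmoved : ∀ s ∈ {s ∈ 𝒜 | compress {i} {j} s ∉ 𝒜}, compress {i} {j} s ≠ s := by grind
  have hsplit : {s ∈ 𝒜 | compress {i} {j} s ∈ 𝒜} ∪ {s ∈ 𝒜 | compress {i} {j} s ∉ 𝒜} = 𝒜 :=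
    filter_union_filter_not_eq _ _
  have hmoved_ne : {s ∈ 𝒜 | compress {i} {j} s ∉ 𝒜}.Nonempty := by
    contrapose! h𝒜
    rw [filter_image, h𝒜, image_empty, union_empty]
    rwa [h𝒜, union_empty] at hsplit
  rw [sum_union compress_disjoint]
  conv_rhs => rw [← hsplit]
  rw [sum_union (disjoint_filter_filter_not _ _ _), add_lt_add_iff_left, filter_image,
    sum_image compress_injOn]
  exact sum_lt_sum_of_nonempty hmoved_ne fun s hs =>
    sum_compress_singleton_singleton_lt hij (hmoved s hs)

end UV

theorem exists_isShiftedFrom_zero {r : ℕ} (𝒜 : Finset (Finset ℕ))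
    (h𝒜 : (𝒜 : Set (Finset ℕ)).Sized r) :
    ∃ ℬ : Finset (Finset ℕ), IsShiftedFrom 0 ℬ ∧ (ℬ : Set (Finset ℕ)).Sized r ∧
      #ℬ = #𝒜 ∧ #(∂ ℬ) ≤ #(∂ 𝒜) := by
  induction hμ : ∑ s ∈ 𝒜, ∑ a ∈ s, a using Nat.strong_induction_on generalizing 𝒜 with
  | _ μ ih =>
  by_cases hshift : ∀ s ∈ 𝒜, ∀ j ∈ s, ∀ i < j, i ∉ s → insert i (s.erase j) ∈ 𝒜
  · exact ⟨𝒜, ⟨fun _ _ _ _ => Nat.zero_le _, fun s hs j hj i _ => hshift s hs j hj i⟩, h𝒜, rfl,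
      le_rfl⟩
  simp only [not_forall] at hshift
  obtain ⟨s, hs, j, hj, i, hij, hi, hnot⟩ := hshift
  have hmoved : 𝓒 {i} {j} 𝒜 ≠ 𝒜 := fun h𝒞 => hnot <| by
    simpa [h𝒞, UV.compress_singleton_singleton hi hj] using
      UV.compress_mem_compression (u := {i}) (v := {j}) hs
  obtain ⟨ℬ, hℬ, hℬr, hcard, hshadow⟩ := ih _ (hμ ▸ UV.sum_sum_compression_lt hij hmoved)
    (𝓒 {i} {j} 𝒜) (h𝒜.uvCompression rfl) rfl
  refine ⟨ℬ, hℬ, hℬr, hcard.trans (UV.card_compression _ _ _), hshadow.trans ?_⟩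
  refine UV.card_shadow_compression_le _ _ fun x hx => ⟨j, mem_singleton_self j, ?_⟩
  rw [mem_singleton.1 hx, erase_singleton, erase_singleton]
  exact UV.isCompressed_self ∅ 𝒜

theorem genChoose_le_card_shadow {k : ℕ} {𝒜 : Finset (Finset ℕ)}
    (h𝒜 : (𝒜 : Set (Finset ℕ)).Sized (k + 1)) (hne : 𝒜.Nonempty) {x : ℝ} (hx : (k : ℝ) ≤ x)
    (hcard : genChoose x (k + 1) ≤ #𝒜) : genChoose x k ≤ #(∂ 𝒜) := by
  obtain ⟨ℬ, hℬ, hℬk, hcardℬ, hshadow⟩ := exists_isShiftedFrom_zero 𝒜 h𝒜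
  have hℬne : ℬ.Nonempty := card_pos.1 (hcardℬ ▸ card_pos.2 hne)
  calc genChoose x k ≤ #(∂ ℬ) := hℬ.genChoose_le_card_shadow hℬk hℬne hx (hcardℬ ▸ hcard)
    _ ≤ #(∂ 𝒜) := by exact_mod_cast hshadow

theorem genChoose_le_card_shadow_iterate {r : ℕ} {𝒜 : Finset (Finset ℕ)}
    (h𝒜 : (𝒜 : Set (Finset ℕ)).Sized r) {x : ℝ} (hx : (r : ℝ) ≤ x)
    (hcard : genChoose x r ≤ #𝒜) : ∀ j ≤ r, genChoose x (r - j) ≤ #(∂^[j] 𝒜)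
  | 0, _ => hcard
  | j + 1, hj => by
    obtain ⟨k, hk⟩ : ∃ k, r - j = k + 1 := ⟨r - j - 1, by omega⟩
    have ih := genChoose_le_card_shadow_iterate h𝒜 hx hcard j (by omega)
    rw [hk] at ih
    have hkx : (k : ℝ) + 1 ≤ x := le_trans (by exact_mod_cast (by omega : k + 1 ≤ r)) hx
    have hne : (∂^[j] 𝒜).Nonempty := by
      rw [← card_pos, ← Nat.cast_pos (α := ℝ)]
      linarith [one_le_genChoose (k := k + 1) (x := x) (by push_cast; linarith)]
    rw [show r - (j + 1) = k by omega, Function.iterate_succ_apply']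
    exact genChoose_le_card_shadow (hk ▸ h𝒜.shadow_iterate) hne (by linarith) ih

lemma levShadow_eq_shadow_iterate {k i : ℕ} {𝒜 : Finset (Finset ℕ)}
    (h𝒜 : (𝒜 : Set (Finset ℕ)).Sized k) (hik : i ≤ k) : levShadow i 𝒜 = ∂^[k - i] 𝒜 := by
  ext t
  simp only [levShadow, mem_biUnion, mem_powersetCard, mem_shadow_iterate_iff_exists_sdiff]
  refine exists_congr fun s => and_congr_right fun hs => and_congr_right fun hts => ?_
  have hts_card := card_le_card hts
  rw [h𝒜 hs] at hts_card
  rw [card_sdiff_of_subset hts, h𝒜 hs]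
  omega

theorem stmt12_general (n k : ℕ) (F : Finset (Finset ℕ))
    (hF : F ⊆ (Finset.Icc 1 n).powersetCard k)
    (x : ℝ) (hxk : (k : ℝ) ≤ x)
    (hcard : (F.card : ℝ) = genChoose x k) :
    ∀ i : ℕ, i < k → genChoose x i ≤ ((levShadow i F).card : ℝ) := by
  have hFk : (F : Set (Finset ℕ)).Sized k := fun s hs => (mem_powersetCard.1 (hF hs)).2
  intro i hik
  rw [levShadow_eq_shadow_iterate hFk hik.le]
  simpa [Nat.sub_sub_self hik.le] using
    genChoose_le_card_shadow_iterate hFk hxk hcard.ge (k - i) (Nat.sub_le k i)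

theorem stmt12 (n k : ℕ) (F : Finset (Finset ℕ))
    (hF : F ⊆ (Finset.Icc 1 n).powersetCard k)
    (x : ℝ) (hxk : (k : ℝ) ≤ x) (hxn : x ≤ (n : ℝ))
    (hcard : (F.card : ℝ) = genChoose x k) :
    ∀ i : ℕ, i < k → genChoose x i ≤ ((levShadow i F).card : ℝ) :=
  stmt12_general n k F hF x hxk hcard
end

section
/- Let n ≥ 10k and let F ⊆ binom([n],k) be an intersecting family with 1 ≤ γ(F) ≤ C(n − ln k, n−k−1), where γ(F) := min_x |{F ∈ F : x ∉ F}| is the diversity. Then |D(F)| < ∑_{i=0}^{k} C(n-1, i). -/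
open Finset

/-- The diversity of a family over the ground set `[n] = {1,…,n}`. -/
noncomputable def diversity (n : ℕ) (F : Finset (Finset ℕ)) : ℕ :=
  sInf {m : ℕ | ∃ x ∈ Finset.Icc 1 n, (F.filter fun A => x ∉ A).card = m}

lemma sum_choose_lt_choose (m j : ℕ) (h : 3 * j ≤ m) :
    ∑ i ∈ Finset.range j, m.choose i < m.choose j := by
  induction j with
  | zero => simp
  | succ j ih =>
    have ihh := ih (by omega)
    rw [Finset.sum_range_succ]
    have h2 : 2 * m.choose j ≤ m.choose (j + 1) := by
      have hid := Nat.choose_succ_right_eq m j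
      have key : 2 * m.choose j * (j + 1) ≤ m.choose (j + 1) * (j + 1) := by
        rw [hid]
        have hmj : 2 * (j + 1) ≤ m - j := by omega
        calc 2 * m.choose j * (j + 1) = m.choose j * (2 * (j + 1)) := by ring
          _ ≤ m.choose j * (m - j) := Nat.mul_le_mul_left _ hmj
      exact Nat.le_of_mul_le_mul_right key (by omega)
    omega

lemma sum_choose_succ_eq (m t : ℕ) :
    ∑ i ∈ Finset.range (t + 1), (m + 1).choose i
      = ∑ i ∈ Finset.range (t + 1), m.choose i + ∑ i ∈ Finset.range t, m.choose i := by
  induction t with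
  | zero => simp
  | succ t ih =>
    rw [Finset.sum_range_succ, ih, Nat.choose_succ_succ,
      Finset.sum_range_succ (fun i => m.choose i) (t + 1),
      Finset.sum_range_succ (fun i => m.choose i) t]
    ring

lemma arith_main (n k : ℕ) (hk : 1 ≤ k) (hn : 10 * k ≤ n) :
    ∑ i ∈ Finset.range k, n.choose i < ∑ i ∈ Finset.range (k + 1), (n - 1).choose i := by
  obtain ⟨t, rfl⟩ : ∃ t, k = t + 1 := ⟨k - 1, by omega⟩
  obtain ⟨m, rfl⟩ : ∃ m, n = m + 1 := ⟨n - 1, by omega⟩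
  simp only [Nat.add_sub_cancel]
  rw [sum_choose_succ_eq m t]
  rw [Finset.sum_range_succ (fun i => m.choose i) (t + 1)]
  have h1 := sum_choose_lt_choose m (t + 1) (by omega)
  have h2 : ∑ i ∈ Finset.range t, m.choose i ≤ ∑ i ∈ Finset.range (t + 1), m.choose i :=
    Finset.sum_le_sum_of_subset (Finset.range_subset_range.2 (by omega))
  omega

theorem stmt15 (n k : ℕ) (hn : 10 * k ≤ n)
    (F : Finset (Finset ℕ)) (hF : F ⊆ (Finset.Icc 1 n).powersetCard k)
    (hint : Intersecting F)
    (hdiv1 : 1 ≤ diversity n F)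
    (hdiv2 : (diversity n F : ℝ) ≤ genChoose ((n : ℝ) - Real.log k) (n - k - 1)) :
    (diffFam F).card < ∑ i ∈ Finset.range (k + 1), (n - 1).choose i := by
  -- First: k ≥ 1, since otherwise F = ∅ and diversity = 0
  rcases Nat.eq_zero_or_pos k with hk0 | hk
  · -- k = 0 : F = ∅
    subst hk0
    have hFe : F = ∅ := by
      by_contra h
      obtain ⟨A, hA⟩ := Finset.nonempty_iff_ne_empty.2 h
      have := hF hA
      rw [Finset.mem_powersetCard] at this
      have hAe : A = ∅ := Finset.card_eq_zero.1 this.2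
      have := hint A hA A hA
      simp [hAe] at this
    -- diversity n ∅ = 0, contradicting hdiv1
    exfalso
    have : diversity n F = 0 := by
      subst hFe
      unfold diversity
      rcases Nat.eq_zero_or_pos n with hn0 | hn1
      · subst hn0
        convert Nat.sInf_empty
        ext m
        simp
      · rw [Nat.sInf_eq_zero]
        left
        exact ⟨1, Finset.mem_Icc.2 ⟨le_rfl, hn1⟩, by simp⟩
    omega
  -- main case
  have hsub : diffFam F ⊆ (Finset.range k).biUnion
      (fun i => (Finset.Icc 1 n).powersetCard i) := by
    intro S hS
    unfold diffFam at hS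
    simp only [Finset.mem_image, Finset.mem_product] at hS
    obtain ⟨p, ⟨hA, hB⟩, rfl⟩ := hS
    have hA' := hF hA
    rw [Finset.mem_powersetCard] at hA'
    have hcard : (p.1 \ p.2).card < k := by
      have h1 := Finset.card_inter_add_card_sdiff p.1 p.2
      have h2 : 1 ≤ (p.1 ∩ p.2).card := Finset.card_pos.2 (hint p.1 hA p.2 hB)
      omega
    refine Finset.mem_biUnion.2 ⟨(p.1 \ p.2).card, Finset.mem_range.2 hcard, ?_⟩
    rw [Finset.mem_powersetCard]
    exact ⟨(Finset.sdiff_subset).trans hA'.1, rfl⟩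
  have hcard1 : (diffFam F).card ≤ ∑ i ∈ Finset.range k, n.choose i := by
    calc (diffFam F).card
        ≤ ((Finset.range k).biUnion fun i => (Finset.Icc 1 n).powersetCard i).card :=
          Finset.card_le_card hsub
      _ ≤ ∑ i ∈ Finset.range k, ((Finset.Icc 1 n).powersetCard i).card :=
          Finset.card_biUnion_le
      _ = ∑ i ∈ Finset.range k, n.choose i := by
          refine Finset.sum_congr rfl fun i _ => ?_
          rw [Finset.card_powersetCard, Nat.card_Icc]
          simp
  exact lt_of_le_of_lt hcard1 (arith_main n k hk hn)
end
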